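/- arXiv:1503.05023 — 12 statements merged into one kernel-verified Lean document; each statement's English description precedes it below -/
import Mathlib

section
/- If f : ℝ≥0 → ℝ is Lipschitz with constant 1 and f(0) = 0, then for all x, y ≥ 0 and all complex c with |c| = 1, |f(x) - c·f(y)| ≤ |x - c·y| (both sides computed in ℂ). -/
/-!
For real `a, b` and `‖c‖ = 1`, the quantity `‖a - c b‖²` is the convex combination
`(1 + Re c)/2 · (a - b)² + (1 - Re c)/2 · (a + b)²`. Hence it suffices to compare `|f x - f y|`
with `|x - y|`, which is the Lipschitz bound, and `|f x + f y|` with `x + y`, which follows from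
`|f x| = |f x - f 0| ≤ x`.
-/

namespace Complex

theorem normSq_ofReal_sub_mul_ofReal {c : ℂ} (hc : ‖c‖ = 1) (a b : ℝ) :
    normSq ((a : ℂ) - c * b) = (1 + c.re) / 2 * (a - b) ^ 2 + (1 - c.re) / 2 * (a + b) ^ 2 := by
  have hc2 : c.re * c.re + c.im * c.im = 1 := by
    rw [← normSq_apply, ← Complex.sq_norm, hc, one_pow]
  simp only [normSq_apply, sub_re, sub_im, mul_re, mul_im, ofReal_re, ofReal_im]
  linear_combination b ^ 2 * hc2

theorem norm_ofReal_sub_mul_ofReal_le {a b x y : ℝ} (hsub : |a - b| ≤ |x - y|)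
    (hadd : |a + b| ≤ |x + y|) {c : ℂ} (hc : ‖c‖ = 1) :
    ‖(a : ℂ) - c * b‖ ≤ ‖(x : ℂ) - c * y‖ := by
  obtain ⟨hre_ge, hre_le⟩ := abs_le.mp (hc ▸ abs_re_le_norm c)
  rw [norm_def, norm_def, normSq_ofReal_sub_mul_ofReal hc, normSq_ofReal_sub_mul_ofReal hc]
  refine Real.sqrt_le_sqrt (add_le_add ?_ ?_)
  · exact mul_le_mul_of_nonneg_left (sq_le_sq.mpr hsub) (by linarith)
  · exact mul_le_mul_of_nonneg_left (sq_le_sq.mpr hadd) (by linarith)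

end Complex

theorem stmt_0 (f : ℝ → ℝ) (h0 : f 0 = 0)
    (hf : ∀ x y : ℝ, 0 ≤ x → 0 ≤ y → |f x - f y| ≤ |x - y|) :
    ∀ x y : ℝ, 0 ≤ x → 0 ≤ y → ∀ c : ℂ, ‖c‖ = 1 →
      ‖(f x : ℂ) - c * (f y : ℂ)‖ ≤ ‖(x : ℂ) - c * (y : ℂ)‖ := by
  intro x y hx hy c hc
  have habs {t : ℝ} (ht : 0 ≤ t) : |f t| ≤ t := by
    simpa [h0, abs_of_nonneg ht] using hf t 0 ht le_rfl
  have hadd : |f x + f y| ≤ |x + y| := by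
    rw [abs_of_nonneg (add_nonneg hx hy)]
    exact (abs_add_le _ _).trans (add_le_add (habs hx) (habs hy))
  exact Complex.norm_ofReal_sub_mul_ofReal_le (hf x y hx hy) hadd hc
end

section
/- For every complex number w and every unimodular complex number c, |w - c| ≤ √2 · |1 + |w - 1| - c|. -/
/-!
Put `r = ‖w - 1‖` and `t = ‖1 - c‖`, so `‖w - c‖ ≤ r + t`. Since `c` lies on the unit circle,
`Re (1 - c) = t² / 2`, hence `‖(1 + r) - c‖² = ‖r + (1 - c)‖² = r² + (1 + r) t² ≥ r² + t²`,
and `(r + t)² ≤ 2 (r² + t²)` finishes the proof.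
-/

namespace Complex

lemma norm_ofReal_add_sq (r : ℝ) (z : ℂ) : ‖(r : ℂ) + z‖ ^ 2 = r ^ 2 + 2 * r * z.re + ‖z‖ ^ 2 := by
  simp only [Complex.sq_norm, normSq_apply, add_re, add_im, ofReal_re, ofReal_im]
  ring

lemma norm_one_sub_sq_of_norm_eq_one {c : ℂ} (hc : ‖c‖ = 1) : ‖1 - c‖ ^ 2 = 2 * (1 - c).re := by
  have hc2 : c.re * c.re + c.im * c.im = 1 := by
    rw [← normSq_apply, ← Complex.sq_norm, hc, one_pow]
  simp only [Complex.sq_norm, normSq_apply, sub_re, sub_im, one_re, one_im]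
  linear_combination hc2

lemma norm_one_add_sub_sq_of_norm_eq_one (r : ℝ) {c : ℂ} (hc : ‖c‖ = 1) :
    ‖((1 + r : ℝ) : ℂ) - c‖ ^ 2 = r ^ 2 + (1 + r) * ‖1 - c‖ ^ 2 := by
  have hshift : ((1 + r : ℝ) : ℂ) - c = (r : ℂ) + (1 - c) := by push_cast; ring
  rw [hshift, norm_ofReal_add_sq, norm_one_sub_sq_of_norm_eq_one hc]
  ring

lemma add_norm_one_sub_le_sqrt_two_mul {r : ℝ} (hr : 0 ≤ r) {c : ℂ} (hc : ‖c‖ = 1) :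
    r + ‖1 - c‖ ≤ Real.sqrt 2 * ‖((1 + r : ℝ) : ℂ) - c‖ := by
  have hsq : (r + ‖1 - c‖) ^ 2 ≤ 2 * ‖((1 + r : ℝ) : ℂ) - c‖ ^ 2 :=
    calc (r + ‖1 - c‖) ^ 2 ≤ 2 * (r ^ 2 + ‖1 - c‖ ^ 2) := add_sq_le
      _ ≤ 2 * ‖((1 + r : ℝ) : ℂ) - c‖ ^ 2 := by
        rw [norm_one_add_sub_sq_of_norm_eq_one r hc]
        nlinarith [mul_nonneg hr (sq_nonneg ‖1 - c‖)]
  rw [← Real.sqrt_sq (norm_nonneg (((1 + r : ℝ) : ℂ) - c)), ← Real.sqrt_mul zero_le_two]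
  exact Real.le_sqrt_of_sq_le hsq

end Complex

theorem stmt_2 (w c : ℂ) (hc : ‖c‖ = 1) :
    ‖w - c‖ ≤ Real.sqrt 2 * ‖((1 + ‖w - 1‖ : ℝ) : ℂ) - c‖ :=
  calc ‖w - c‖ ≤ ‖w - 1‖ + ‖1 - c‖ := norm_sub_le_norm_sub_add_norm_sub w 1 c
    _ ≤ Real.sqrt 2 * ‖((1 + ‖w - 1‖ : ℝ) : ℂ) - c‖ :=
      Complex.add_norm_one_sub_le_sqrt_two_mul (norm_nonneg _) hc
end

section
/- The supremum over w ∈ ℂ and unimodular c ∈ ℂ of |w - c| / |1 + |w-1| - c| equals √2; in particular, as t → 0, with w = 1 - it and c = e^{it}, the quotient |1 - e^{it} - it| / |1 - e^{it} + t| tends to √2. -/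
/-!
The upper bound is the triangle inequality `|w - c| ≤ R + |1 - c|` with `R = |w - 1|`, followed by
`(R + s)² ≤ 2 |1 + R - c|²` for `s = |1 - c|`, which holds because `|c| = 1` makes
`|1 + R - c|² = R² + R s² + s²`. Sharpness: for `w = 1 - i t`, `c = e^{i t}` numerator and
denominator vanish to first order at `t = 0`, with derivatives `-2i` and `1 - i`, so the quotient
tends to `|-2i| / |1 - i| = √2`.
-/

open Complex Filter Topology

lemma add_norm_one_sub_le_sqrt_two_mul_norm {R : ℝ} (hR : 0 ≤ R) {c : ℂ} (hc : ‖c‖ = 1) :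
    R + ‖1 - c‖ ≤ √2 * ‖((1 + R : ℝ) : ℂ) - c‖ := by
  set s := ‖1 - c‖
  set D := ‖((1 + R : ℝ) : ℂ) - c‖
  have hc2 : c.re ^ 2 + c.im ^ 2 = 1 := by
    have := Complex.sq_norm c
    rw [hc, Complex.normSq_apply] at this
    linarith
  have hs2 : s ^ 2 = (1 - c.re) ^ 2 + c.im ^ 2 := by
    rw [Complex.sq_norm, Complex.normSq_apply, sub_re, sub_im, one_re, one_im]; ring
  have hD2 : D ^ 2 = (1 + R - c.re) ^ 2 + c.im ^ 2 := by
    rw [Complex.sq_norm, Complex.normSq_apply, sub_re, sub_im, ofReal_re, ofReal_im]; ring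
  -- `2 D² - (R + s)² = (R - s)² + 2 R s²`
  have hD2' : D ^ 2 = R ^ 2 + R * s ^ 2 + s ^ 2 := by
    rw [hD2, hs2]; linear_combination (-R) * hc2
  have hsq : (R + s) ^ 2 ≤ (√2 * D) ^ 2 := by
    rw [mul_pow, Real.sq_sqrt zero_le_two, hD2']
    nlinarith [sq_nonneg (R - s), mul_nonneg hR (sq_nonneg s)]
  exact (pow_le_pow_iff_left₀ (by positivity) (by positivity) two_ne_zero).mp hsq

lemma norm_sub_le_sqrt_two_mul_norm (w : ℂ) {c : ℂ} (hc : ‖c‖ = 1) :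
    ‖w - c‖ ≤ √2 * ‖((1 + ‖w - 1‖ : ℝ) : ℂ) - c‖ :=
  calc ‖w - c‖ = ‖(w - 1) + (1 - c)‖ := by rw [sub_add_sub_cancel]
    _ ≤ ‖w - 1‖ + ‖1 - c‖ := norm_add_le _ _
    _ ≤ _ := add_norm_one_sub_le_sqrt_two_mul_norm (norm_nonneg _) hc

theorem tendsto_norm_div_norm_nhdsNE_of_hasDerivAt {𝕜 E F : Type*} [NontriviallyNormedField 𝕜]
    [NormedAddCommGroup E] [NormedSpace 𝕜 E] [NormedAddCommGroup F] [NormedSpace 𝕜 F]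
    {f : 𝕜 → E} {g : 𝕜 → F} {a : E} {b : F} {x : 𝕜} (hf : HasDerivAt f a x)
    (hg : HasDerivAt g b x) (hf0 : f x = 0) (hg0 : g x = 0) (hb : b ≠ 0) :
    Tendsto (fun t => ‖f t‖ / ‖g t‖) (𝓝[≠] x) (𝓝 (‖a‖ / ‖b‖)) := by
  refine ((hasDerivAt_iff_tendsto_slope.mp hf).norm.div
    (hasDerivAt_iff_tendsto_slope.mp hg).norm (norm_ne_zero_iff.mpr hb)).congr' ?_
  filter_upwards [self_mem_nhdsWithin] with t ht
  have ht' : ‖(t - x)⁻¹‖ ≠ 0 := by simpa [sub_eq_zero] using ht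
  simp only [slope_def_module, hf0, hg0, sub_zero, norm_smul, Pi.div_apply]
  exact mul_div_mul_left _ _ ht'

lemma hasDerivAt_I_mul_ofReal (t : ℝ) : HasDerivAt (fun t : ℝ => I * t) I t := by
  simpa using ((hasDerivAt_id t).ofReal_comp).const_mul I

lemma hasDerivAt_exp_I_mul_ofReal_zero : HasDerivAt (fun t : ℝ => exp (I * t)) I 0 := by
  simpa using (hasDerivAt_I_mul_ofReal 0).cexp

lemma tendsto_norm_one_sub_exp_div :
    Tendsto (fun t : ℝ => ‖1 - exp (I * t) - I * t‖ / ‖1 - exp (I * t) + (t : ℂ)‖)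
      (𝓝[≠] 0) (𝓝 √2) := by
  have hnum : HasDerivAt (fun t : ℝ => 1 - exp (I * t) - I * t) (-2 * I) 0 := by
    have h := ((hasDerivAt_const (0 : ℝ) (1 : ℂ)).sub hasDerivAt_exp_I_mul_ofReal_zero).sub
      (hasDerivAt_I_mul_ofReal 0)
    rwa [show (0 : ℂ) - I - I = -2 * I by ring] at h
  have hden : HasDerivAt (fun t : ℝ => 1 - exp (I * t) + t) (1 - I) 0 := by
    have h := ((hasDerivAt_const (0 : ℝ) (1 : ℂ)).sub hasDerivAt_exp_I_mul_ofReal_zero).add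
      (hasDerivAt_id (0 : ℝ)).ofReal_comp
    rwa [ofReal_one, show (0 : ℂ) - I + 1 = 1 - I by ring] at h
  have hnorm : ‖(1 : ℂ) - I‖ = √2 := by
    rw [Complex.norm_def, Complex.normSq_apply]; norm_num
  have hlim : ‖-2 * I‖ / ‖1 - I‖ = √2 := by
    rw [hnorm, div_eq_iff (by positivity)]; simp
  rw [← hlim]
  exact tendsto_norm_div_norm_nhdsNE_of_hasDerivAt hnum hden (by simp) (by simp)
    (by simp [sub_eq_zero, Complex.ext_iff])

theorem stmt_3 :
    sSup {r : ℝ | ∃ w c : ℂ, ‖c‖ = 1 ∧ ((1 + ‖w - 1‖ : ℝ) : ℂ) - c ≠ 0 ∧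
        r = ‖w - c‖ / ‖((1 + ‖w - 1‖ : ℝ) : ℂ) - c‖} = Real.sqrt 2 ∧
    Filter.Tendsto
      (fun t : ℝ =>
        ‖1 - Complex.exp (Complex.I * t) - Complex.I * t‖ /
          ‖1 - Complex.exp (Complex.I * t) + (t : ℂ)‖)
      (nhdsWithin 0 {0}ᶜ) (nhds (Real.sqrt 2)) := by
  refine ⟨csSup_eq_of_forall_le_of_forall_lt_exists_gt ?_ ?_ ?_, tendsto_norm_one_sub_exp_div⟩
  · exact ⟨_, 1, -1, by simp, by norm_num, rfl⟩
  · rintro r ⟨w, c, hc, hne, rfl⟩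
    exact (div_le_iff₀ (norm_pos_iff.mpr hne)).mpr (norm_sub_le_sqrt_two_mul_norm w hc)
  · intro b hb
    have hlim := tendsto_norm_one_sub_exp_div.mono_left (nhdsGT_le_nhdsNE 0)
    obtain ⟨t, hbt, ht⟩ :=
      ((hlim.eventually (eventually_gt_nhds hb)).and self_mem_nhdsWithin).exists
    have hwt : ‖(1 - I * t) - 1‖ = t := by simp [abs_of_pos ht]
    refine ⟨_, ⟨1 - I * t, exp (I * t), by simp [mul_comm I], ?_, rfl⟩, ?_⟩
    · rw [hwt, Ne, sub_eq_zero, Complex.ext_iff]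
      simp only [mul_comm I, exp_ofReal_mul_I_re, ofReal_re, ofReal_im, exp_ofReal_mul_I_im]
      rintro ⟨hre, -⟩
      linarith [Real.cos_le_one t]
    · rw [hwt]
      convert hbt using 3 <;> push_cast <;> ring
end

section
/- If f : ℝ≥0 → ℂ is Lipschitz with constant L and f(0) = 0, then for all x, y ≥ 0 and all unimodular complex c, |f(x) - c·f(y)| ≤ √2 · L · |x - c·y|. -/
/-
Write `t = ‖1 - c‖`. Splitting `f x - c f y` as `(f x - f y) + (1 - c) f y` or as
`c (f x - f y) + (1 - c) f x`, and using `‖f z‖ ≤ L z` (from `f 0 = 0`), gives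
`‖f x - c f y‖ ≤ L (|x - y| + min x y · t)`. On the other side
`‖x - c y‖² = (x - y)² + x y t²`, and `min x y ² ≤ x y`, so the bound follows from
`(a + b)² ≤ 2 (a² + b²)`.
-/

theorem norm_sub_smul_le_norm_sub_add_min {𝕜 E : Type*} [NormedField 𝕜]
    [SeminormedAddCommGroup E] [NormedSpace 𝕜 E] (u v : E) {c : 𝕜} (hc : ‖c‖ = 1) :
    ‖u - c • v‖ ≤ ‖u - v‖ + ‖1 - c‖ * min ‖u‖ ‖v‖ := by
  have via_v : ‖u - c • v‖ ≤ ‖u - v‖ + ‖1 - c‖ * ‖v‖ := by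
    calc ‖u - c • v‖ = ‖(u - v) + (1 - c) • v‖ := by rw [sub_smul, one_smul]; abel_nf
      _ ≤ ‖u - v‖ + ‖1 - c‖ * ‖v‖ := (norm_add_le _ _).trans_eq (by rw [norm_smul])
  have via_u : ‖u - c • v‖ ≤ ‖u - v‖ + ‖1 - c‖ * ‖u‖ := by
    calc ‖u - c • v‖ = ‖c • (u - v) + (1 - c) • u‖ := by
          rw [smul_sub, sub_smul, one_smul]; abel_nf
      _ ≤ ‖u - v‖ + ‖1 - c‖ * ‖u‖ :=
          (norm_add_le _ _).trans_eq (by rw [norm_smul, norm_smul, hc, one_mul])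
  rw [mul_min_of_nonneg _ _ (norm_nonneg _)]
  rcases min_choice (‖1 - c‖ * ‖u‖) (‖1 - c‖ * ‖v‖) with h | h <;> rw [h] <;> assumption

theorem Complex.norm_ofReal_sub_mul_ofReal (x y : ℝ) {c : ℂ} (hc : ‖c‖ = 1) :
    ‖(x : ℂ) - c * y‖ = √((x - y) ^ 2 + x * y * ‖1 - c‖ ^ 2) := by
  have hc2 : c.re * c.re + c.im * c.im = 1 := by
    rw [← Complex.normSq_apply, ← Complex.sq_norm, hc, one_pow]
  rw [Complex.norm_def, Complex.sq_norm, Complex.normSq_apply, Complex.normSq_apply]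
  congr 1
  simp only [Complex.sub_re, Complex.sub_im, Complex.mul_re, Complex.mul_im, Complex.ofReal_re,
    Complex.ofReal_im, Complex.one_re, Complex.one_im]
  linear_combination (y ^ 2 - x * y) * hc2

theorem abs_sub_add_min_mul_le {x y : ℝ} (hx : 0 ≤ x) (hy : 0 ≤ y) (t : ℝ) :
    |x - y| + min x y * t ≤ √2 * √((x - y) ^ 2 + x * y * t ^ 2) := by
  have hmin : min x y ^ 2 ≤ x * y := by
    rw [← min_mul_max, sq]
    exact mul_le_mul_of_nonneg_left min_le_max (le_min hx hy)
  rw [← Real.sqrt_mul zero_le_two]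
  refine (le_abs_self _).trans (Real.abs_le_sqrt ?_)
  calc (|x - y| + min x y * t) ^ 2 ≤ 2 * (|x - y| ^ 2 + (min x y * t) ^ 2) := add_sq_le
    _ ≤ 2 * ((x - y) ^ 2 + x * y * t ^ 2) := by
      rw [sq_abs, mul_pow]; gcongr

theorem stmt_6 (f : ℝ → ℂ) (L : ℝ) (h0 : f 0 = 0)
    (hf : ∀ x y : ℝ, 0 ≤ x → 0 ≤ y → ‖f x - f y‖ ≤ L * |x - y|) :
    ∀ x y : ℝ, 0 ≤ x → 0 ≤ y → ∀ c : ℂ, ‖c‖ = 1 →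
      ‖f x - c * f y‖ ≤ Real.sqrt 2 * L * ‖(x : ℂ) - c * (y : ℂ)‖ := by
  intro x y hx hy c hc
  have norm_le : ∀ z, 0 ≤ z → ‖f z‖ ≤ L * z := fun z hz => by
    simpa [h0, abs_of_nonneg hz] using hf z 0 hz le_rfl
  have hL : 0 ≤ L := by simpa using (norm_nonneg _).trans (norm_le 1 zero_le_one)
  have hmin : min ‖f x‖ ‖f y‖ ≤ L * min x y := by
    rw [mul_min_of_nonneg _ _ hL]; exact min_le_min (norm_le x hx) (norm_le y hy)
  calc ‖f x - c * f y‖ ≤ ‖f x - f y‖ + ‖1 - c‖ * min ‖f x‖ ‖f y‖ :=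
        norm_sub_smul_le_norm_sub_add_min (f x) (f y) hc
    _ ≤ L * |x - y| + ‖1 - c‖ * (L * min x y) := by gcongr; exact hf x y hx hy
    _ = L * (|x - y| + min x y * ‖1 - c‖) := by ring
    _ ≤ L * (√2 * ‖(x : ℂ) - c * y‖) := by
      rw [Complex.norm_ofReal_sub_mul_ofReal x y hc]
      gcongr; exact abs_sub_add_min_mul_le hx hy _
    _ = √2 * L * ‖(x : ℂ) - c * y‖ := by ring
end

section
/- If U and V are n × n unitary matrices over ℂ, then the Hadamard (entrywise) product U ⊙ V is complex doubly substochastic: for each row i, ∑_j |(U⊙V)_{ij}| ≤ 1, and for each column j, ∑_i |(U⊙V)_{ij}| ≤ 1. -/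
open Finset

lemma row_sq_sum {n : ℕ} {U : Matrix (Fin n) (Fin n) ℂ}
    (h : U * star U = 1) (i : Fin n) : ∑ j, ‖U i j‖ ^ 2 = 1 := by
  have h1 : (U * star U) i i = (1 : Matrix (Fin n) (Fin n) ℂ) i i := by rw [h]
  simp only [Matrix.mul_apply, Matrix.star_apply, Matrix.one_apply_eq, Complex.star_def,
    Complex.mul_conj'] at h1
  have h2 := congrArg Complex.re h1
  simpa [← Complex.ofReal_pow] using h2

theorem stmt_8 (n : ℕ) (U V : Matrix (Fin n) (Fin n) ℂ)
    (hU : U ∈ Matrix.unitaryGroup (Fin n) ℂ)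
    (hV : V ∈ Matrix.unitaryGroup (Fin n) ℂ) :
    (∀ i, ∑ j, ‖U i j * V i j‖ ≤ 1) ∧ (∀ j, ∑ i, ‖U i j * V i j‖ ≤ 1) := by
  have key : ∀ (A B : Matrix (Fin n) (Fin n) ℂ), A * star A = 1 → B * star B = 1 →
      ∀ i, ∑ j, ‖A i j * B i j‖ ≤ 1 := by
    intro A B hA hB i
    have hcs := Finset.sum_mul_sq_le_sq_mul_sq Finset.univ (fun j => ‖A i j‖) (fun j => ‖B i j‖)
    rw [row_sq_sum hA i, row_sq_sum hB i, one_mul] at hcs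
    have hnonneg : (0:ℝ) ≤ ∑ j, ‖A i j‖ * ‖B i j‖ :=
      Finset.sum_nonneg fun j _ => mul_nonneg (norm_nonneg _) (norm_nonneg _)
    calc ∑ j, ‖A i j * B i j‖ = ∑ j, ‖A i j‖ * ‖B i j‖ := by simp [norm_mul]
      _ ≤ 1 := by nlinarith
  have hU1 := hU.2
  have hU2 := hU.1
  have hV1 := hV.2
  have hV2 := hV.1
  constructor
  · intro i; exact key U V hU1 hV1 i
  · intro j
    have trans_unit : ∀ (A : Matrix (Fin n) (Fin n) ℂ), star A * A = 1 →
        A.transpose * star A.transpose = 1 := by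
      intro A hA
      ext a b
      have h2 : (A.transpose * star A.transpose) a b = (star A * A) b a := by
        simp [Matrix.mul_apply, Matrix.star_apply, Matrix.transpose_apply, mul_comm]
      rw [h2, hA]
      simp [Matrix.one_apply, eq_comm]
    have hUt := trans_unit U hU2
    have hVt := trans_unit V hV2
    simpa [Matrix.transpose_apply] using key U.transpose V.transpose hUt hVt j
end

section
/- Every matrix of the form M_{π,γ} (the matrix with entry γ_j in position (j, π(j)) and zeros elsewhere, for a permutation π of {1,…,n} and unimodular entries γ_j) is an extreme point of the convex set of complex doubly substochastic n × n matrices. -/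
/-- A complex square matrix is complex doubly substochastic (cdss) if every
row and every column has ℓ¹-sum of absolute values at most 1. -/
def IsCdss {n : ℕ} (M : Matrix (Fin n) (Fin n) ℂ) : Prop :=
  (∀ i, ∑ j, ‖M i j‖ ≤ 1) ∧ (∀ j, ∑ i, ‖M i j‖ ≤ 1)

lemma avg_extreme (γ a b : ℂ) (hγ : ‖γ‖ = 1) (ha : ‖a‖ ≤ 1) (hb : ‖b‖ ≤ 1)
    (h : a + b = 2 * γ) : a = γ ∧ b = γ := by
  have hab : ‖a + b‖ = 2 := by
    rw [h, norm_mul, hγ]; simp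
  have hpar := parallelogram_law_with_norm ℝ a b
  have h0 : ‖a - b‖ = 0 := by
    nlinarith [norm_nonneg (a - b), norm_nonneg a, norm_nonneg b]
  have hab2 : a = b := by rwa [norm_eq_zero, sub_eq_zero] at h0
  have : a = γ := by
    rw [← hab2, ← two_mul] at h
    exact mul_left_cancel₀ two_ne_zero h
  exact ⟨this, hab2 ▸ this⟩

theorem stmt_9 (n : ℕ) (π : Equiv.Perm (Fin n)) (γ : Fin n → ℂ)
    (hγ : ∀ j, ‖γ j‖ = 1)
    (M : Matrix (Fin n) (Fin n) ℂ)
    (hM : M = fun j k => if k = π j then γ j else 0) :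
    ∀ A B : Matrix (Fin n) (Fin n) ℂ, IsCdss A → IsCdss B →
      M = (2⁻¹ : ℝ) • (A + B) → A = M ∧ B = M := by
  intro A B hA hB hEq
  have key : ∀ j k, A j k + B j k = (2 : ℂ) * M j k := by
    intro j k
    have h := congrFun (congrFun hEq j) k
    simp only [Matrix.smul_apply, Matrix.add_apply] at h
    rw [h]
    push_cast [Complex.real_smul]
    ring
  have entry : ∀ j, A j (π j) = γ j ∧ B j (π j) = γ j := by
    intro j
    have ha : ‖A j (π j)‖ ≤ 1 :=
      le_trans (Finset.single_le_sum (fun k _ => norm_nonneg (A j k))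
        (Finset.mem_univ (π j))) (hA.1 j)
    have hb : ‖B j (π j)‖ ≤ 1 :=
      le_trans (Finset.single_le_sum (fun k _ => norm_nonneg (B j k))
        (Finset.mem_univ (π j))) (hB.1 j)
    have h2 : A j (π j) + B j (π j) = 2 * γ j := by
      have := key j (π j)
      rw [hM] at this
      simpa using this
    exact avg_extreme _ _ _ (hγ j) ha hb h2
  have rowzero : ∀ (C : Matrix (Fin n) (Fin n) ℂ), IsCdss C →
      (∀ j, C j (π j) = γ j) → C = M := by
    intro C hC hCd
    funext j k
    rw [hM]
    by_cases hk : k = π j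
    · simp [hk, hCd j]
    · simp only [hk, if_false]
      have hsum := hC.1 j
      have h1 : ‖C j (π j)‖ = 1 := by rw [hCd j, hγ j]
      have hsplit := Finset.add_sum_erase Finset.univ (fun k => ‖C j k‖)
        (Finset.mem_univ (π j))
      have hle : ∑ m ∈ Finset.univ.erase (π j), ‖C j m‖ ≤ 0 := by
        rw [← hsplit] at hsum
        linarith
      have hk' : k ∈ Finset.univ.erase (π j) := by
        simp [Finset.mem_erase, hk]
      have : ‖C j k‖ ≤ 0 :=
        le_trans (Finset.single_le_sum (fun m _ => norm_nonneg (C j m)) hk') hle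
      exact norm_le_zero_iff.mp this
  exact ⟨rowzero A hA (fun j => (entry j).1), rowzero B hB (fun j => (entry j).2)⟩
end

section
/- If an extreme point M of the set of complex doubly substochastic n × n matrices has some row whose ℓ¹-sum is strictly less than 1, then a contradiction follows; equivalently, every extreme point of the cdss matrices has all row sums and column sums of absolute values exactly equal to 1. -/
open Matrix

lemma exists_sum_col_lt_one_of_sum_row_lt_one {ι : Type*} [Fintype ι] {a : ι → ι → ℝ}
    (hrow : ∀ i, ∑ j, a i j ≤ 1) {i : ι} (hi : ∑ j, a i j < 1) : ∃ j, ∑ i, a i j < 1 := by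
  by_contra! hcol
  have htotal_lt : ∑ i, ∑ j, a i j < ∑ _i : ι, (1 : ℝ) :=
    Finset.sum_lt_sum (fun i _ => hrow i) ⟨i, Finset.mem_univ i, hi⟩
  have htotal_ge : ∑ _j : ι, (1 : ℝ) ≤ ∑ j, ∑ i, a i j := Finset.sum_le_sum fun j _ => hcol j
  rw [Finset.sum_comm] at htotal_lt
  linarith

section single

variable {m n E : Type*} [Fintype n] [DecidableEq m] [DecidableEq n] [SeminormedAddCommGroup E]

lemma sum_norm_single_row (i p : m) (j : n) (c : E) :
    ∑ q, ‖single i j c p q‖ = if i = p then ‖c‖ else 0 := by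
  by_cases h : i = p
  · subst h
    simp [single_apply, apply_ite (‖·‖)]
  · simp [h]

lemma sum_norm_add_single_row_le (M : Matrix m n E) (i p : m) (j : n) (c : E) :
    ∑ q, ‖(M + single i j c) p q‖ ≤ ∑ q, ‖M p q‖ + if i = p then ‖c‖ else 0 :=
  calc ∑ q, ‖(M + single i j c) p q‖ ≤ ∑ q, (‖M p q‖ + ‖single i j c p q‖) :=
        Finset.sum_le_sum fun q _ => norm_add_le _ _
    _ = _ := by rw [Finset.sum_add_distrib, sum_norm_single_row]

lemma sum_norm_row_add_single_le_one {M : Matrix m n E} (hM : ∀ p, ∑ q, ‖M p q‖ ≤ 1)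
    {i : m} {c : E} (hi : ∑ q, ‖M i q‖ + ‖c‖ ≤ 1) (j : n) (p : m) :
    ∑ q, ‖(M + single i j c) p q‖ ≤ 1 := by
  refine (sum_norm_add_single_row_le M i p j c).trans ?_
  split_ifs with h
  · exact h ▸ hi
  · simpa using hM p

end single

lemma IsCdss.transpose {n : ℕ} {M : Matrix (Fin n) (Fin n) ℂ} (hM : IsCdss M) : IsCdss Mᵀ :=
  ⟨hM.2, hM.1⟩

lemma IsCdss.add_single {n : ℕ} {M : Matrix (Fin n) (Fin n) ℂ} (hM : IsCdss M) {i j : Fin n}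
    {c : ℂ} (hi : ∑ k, ‖M i k‖ + ‖c‖ ≤ 1) (hj : ∑ k, ‖M k j‖ + ‖c‖ ≤ 1) :
    IsCdss (M + single i j c) := by
  refine ⟨sum_norm_row_add_single_le_one hM.1 hi j, fun q => ?_⟩
  have := sum_norm_row_add_single_le_one hM.transpose.1 hj i q
  rwa [← transpose_single, ← transpose_add] at this

lemma sum_norm_row_eq_one_or_sum_norm_col_eq_one {n : ℕ} {M : Matrix (Fin n) (Fin n) ℂ}
    (hM : IsCdss M)
    (hext : ∀ A B : Matrix (Fin n) (Fin n) ℂ, IsCdss A → IsCdss B →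
      M = (2⁻¹ : ℝ) • (A + B) → A = B) (i j : Fin n) :
    ∑ k, ‖M i k‖ = 1 ∨ ∑ k, ‖M k j‖ = 1 := by
  by_contra! h
  set ε := min (1 - ∑ k, ‖M i k‖) (1 - ∑ k, ‖M k j‖)
  have hε : 0 < ε := lt_min (sub_pos.2 ((hM.1 i).lt_of_ne h.1)) (sub_pos.2 ((hM.2 j).lt_of_ne h.2))
  have hεi : ε ≤ 1 - ∑ k, ‖M i k‖ := min_le_left _ _
  have hεj : ε ≤ 1 - ∑ k, ‖M k j‖ := min_le_right _ _
  have hnorm : ‖(ε : ℂ)‖ = ε := by rw [Complex.norm_real, Real.norm_of_nonneg hε.le]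
  have hi : ∑ k, ‖M i k‖ + ‖(ε : ℂ)‖ ≤ 1 := by rw [hnorm]; linarith
  have hj : ∑ k, ‖M k j‖ + ‖(ε : ℂ)‖ ≤ 1 := by rw [hnorm]; linarith
  have hplus := hM.add_single hi hj
  have hminus := hM.add_single (c := -ε) (by rwa [norm_neg]) (by rwa [norm_neg])
  have hmid : M = (2⁻¹ : ℝ) • ((M + single i j (ε : ℂ)) + (M + single i j (-ε : ℂ))) := by
    rw [← single_neg, ← sub_eq_add_neg, add_add_sub_cancel, ← two_smul ℝ M, smul_smul]
    norm_num
  have hsingle := add_left_cancel (hext _ _ hplus hminus hmid)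
  have hεε : (ε : ℂ) = -ε := by simpa using congrFun₂ hsingle i j
  exact hε.ne' (by exact_mod_cast self_eq_neg.mp hεε)

theorem stmt_10 (n : ℕ) (M : Matrix (Fin n) (Fin n) ℂ) (hM : IsCdss M)
    (hext : ∀ A B : Matrix (Fin n) (Fin n) ℂ, IsCdss A → IsCdss B →
      M = (2⁻¹ : ℝ) • (A + B) → A = B) :
    (∀ i, ∑ j, ‖M i j‖ = 1) ∧ (∀ j, ∑ i, ‖M i j‖ = 1) := by
  have tight := sum_norm_row_eq_one_or_sum_norm_col_eq_one hM hext
  constructor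
  · intro i
    by_contra hi
    obtain ⟨j, hj⟩ :=
      exists_sum_col_lt_one_of_sum_row_lt_one hM.1 ((hM.1 i).lt_of_ne hi)
    exact (tight i j).elim hi hj.ne
  · intro j
    by_contra hj
    obtain ⟨i, hi⟩ :=
      exists_sum_col_lt_one_of_sum_row_lt_one hM.transpose.1 ((hM.2 j).lt_of_ne hj)
    exact (tight i j).elim hi.ne hj
end

section
/- An n × n complex matrix is complex doubly substochastic if and only if it lies in the convex hull of the matrices M_{π,γ}, where π ranges over permutations of {1,…,n} and γ over vectors of unimodular complex numbers, and M_{π,γ} has entry γ_j at position (j, π(j)) and zeros elsewhere. -/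
/-!
Taking absolute values entrywise turns a cdss matrix `M` into a real doubly substochastic matrix
`A`, and `A` is the upper left block of the doubly stochastic dilation
`[[A, 1 - diag(row sums)], [1 - diag(column sums), Aᵀ]]`. By Birkhoff's theorem `A` is therefore
a convex combination of upper left blocks of permutation matrices, i.e. of partial permutation
matrices, and restoring the phases of the entries of `M` (an `ℝ`-linear operation) writes `M` as
a convex combination of partial permutation matrices with entries of modulus at most one. Each of
these is supported on the graph of a full permutation, and a vector in the polydisc is a convex
combination of vectors on the torus. Conversely the matrices `M_{π,γ}` are cdss and the cdss
condition is convex.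
-/

open Set Matrix Complex

lemma IsLinearMap.mapsTo_convexHull {𝕜 E F : Type*} [Field 𝕜] [LinearOrder 𝕜]
    [IsStrictOrderedRing 𝕜] [AddCommGroup E] [Module 𝕜 E] [AddCommGroup F] [Module 𝕜 F]
    {f : E → F} (hf : IsLinearMap 𝕜 f) {s : Set E} {t : Set F} (hst : MapsTo f s (convexHull 𝕜 t)) :
    MapsTo f (convexHull 𝕜 s) (convexHull 𝕜 t) :=
  convexHull_min hst ((convex_convexHull 𝕜 t).is_linear_preimage hf)

lemma Set.InjOn.exists_perm_eqOn {α : Type*} [Fintype α] {s : Set α} {f : α → α}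
    (hf : InjOn f s) : ∃ π : Equiv.Perm α, EqOn π f s := by
  classical
  obtain ⟨g, hg⟩ := MapsTo.exists_equiv_extend_of_card_eq (t := Finset.univ)
    Finset.card_univ.symm (fun _ _ => Finset.mem_coe.2 (Finset.mem_univ _)) hf
  exact ⟨g.trans (Equiv.subtypeUnivEquiv Finset.mem_univ), hg⟩

lemma Equiv.Perm.exists_perm_apply_eq_of_apply_inl_eq_inl {ι κ : Type*} [Fintype ι]
    (σ : Equiv.Perm (ι ⊕ κ)) :
    ∃ π : Equiv.Perm ι, ∀ j k, σ (.inl j) = .inl k → π j = k := by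
  let f : ι → ι := fun j => Sum.elim id (fun _ => j) (σ (.inl j))
  have hf : ∀ j k, σ (.inl j) = .inl k → f j = k := fun j k h => by simp [f, h]
  have hinj : InjOn f {j | ∃ k, σ (.inl j) = .inl k} := by
    rintro a ⟨ka, ha⟩ b ⟨kb, hb⟩ hab
    rw [hf a ka ha, hf b kb hb] at hab
    exact Sum.inl_injective (σ.injective (by rw [ha, hb, hab]))
  obtain ⟨π, hπ⟩ := hinj.exists_perm_eqOn
  exact ⟨π, fun j k h => (hπ ⟨k, h⟩).trans (hf j k h)⟩

lemma toBlocks₁₁_permMatrix_apply {R ι κ : Type*} [DecidableEq ι] [DecidableEq κ] [Zero R]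
    [One R] (σ : Equiv.Perm (ι ⊕ κ)) (j k : ι) :
    (σ.permMatrix R).toBlocks₁₁ j k = if σ (.inl j) = .inl k then 1 else 0 := by
  simp [toBlocks₁₁, Equiv.Perm.permMatrix, PEquiv.toMatrix_apply, eq_comm]

section Dilation

variable {R ι : Type*} [Fintype ι] [DecidableEq ι]

def substochasticDilation [Ring R] (A : Matrix ι ι R) : Matrix (ι ⊕ ι) (ι ⊕ ι) R :=
  fromBlocks A (diagonal (1 - A *ᵥ 1)) (diagonal (1 - 1 ᵥ* A)) Aᵀ

lemma substochasticDilation_mem_doublyStochastic [CommRing R] [PartialOrder R] [IsOrderedRing R]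
    {A : Matrix ι ι R} (hA : ∀ i j, 0 ≤ A i j) (hrow : A *ᵥ 1 ≤ 1) (hcol : 1 ᵥ* A ≤ 1) :
    substochasticDilation A ∈ doublyStochastic R (ι ⊕ ι) := by
  have hdiag {v : ι → R} (hv : 0 ≤ v) (i j : ι) : 0 ≤ diagonal v i j := by
    rw [diagonal_apply]
    split_ifs
    exacts [hv i, le_rfl]
  refine ⟨?_, ?_, ?_⟩
  · rintro (i | i) (j | j)
    exacts [hA i j, hdiag (sub_nonneg.2 hrow) i j, hdiag (sub_nonneg.2 hcol) i j, hA j i]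
  · ext (i | i) <;>
      simp [substochasticDilation, fromBlocks_mulVec, mulVec_diagonal, mulVec_transpose]
  · ext (j | j) <;>
      simp [substochasticDilation, vecMul_fromBlocks, vecMul_diagonal, vecMul_transpose]

theorem mem_convexHull_toBlocks₁₁_permMatrix [Field R] [LinearOrder R] [IsStrictOrderedRing R]
    {A : Matrix ι ι R} (hA : ∀ i j, 0 ≤ A i j) (hrow : A *ᵥ 1 ≤ 1) (hcol : 1 ᵥ* A ≤ 1) :
    A ∈ convexHull R (range fun σ : Equiv.Perm (ι ⊕ ι) => (σ.permMatrix R).toBlocks₁₁) := by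
  have hlin : IsLinearMap R (toBlocks₁₁ : Matrix (ι ⊕ ι) (ι ⊕ ι) R → Matrix ι ι R) :=
    ⟨fun _ _ => rfl, fun _ _ => rfl⟩
  have hdil : substochasticDilation A ∈ convexHull R {σ.permMatrix R | σ : Equiv.Perm (ι ⊕ ι)} := by
    rw [← doublyStochastic_eq_convexHull_permMatrix]
    exact substochasticDilation_mem_doublyStochastic hA hrow hcol
  simpa [substochasticDilation] using
    hlin.mapsTo_convexHull (by rintro _ ⟨σ, rfl⟩; exact subset_convexHull R _ ⟨σ, rfl⟩) hdil

end Dilation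

lemma convex_setOf_forall_sum_norm_le {m n E : Type*} [Fintype n] [SeminormedAddCommGroup E]
    [NormedSpace ℝ E] : Convex ℝ {M : Matrix m n E | ∀ i, ∑ j, ‖M i j‖ ≤ 1} := by
  intro A hA B hB a b ha hb hab i
  calc ∑ j, ‖(a • A + b • B) i j‖ ≤ ∑ j, (a * ‖A i j‖ + b * ‖B i j‖) := by
        gcongr with j
        refine (norm_add_le _ _).trans_eq ?_
        simp [norm_smul, abs_of_nonneg ha, abs_of_nonneg hb]
    _ = a * ∑ j, ‖A i j‖ + b * ∑ j, ‖B i j‖ := by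
        rw [Finset.sum_add_distrib, Finset.mul_sum, Finset.mul_sum]
    _ ≤ a * 1 + b * 1 := by gcongr; exacts [hA i, hB i]
    _ = 1 := by rw [mul_one, mul_one, hab]

section PhasedPermMatrix

variable {ι : Type*} [Fintype ι] [DecidableEq ι]

/-- The matrix `M_{π,γ}`. -/
def phasedPermMatrix (π : Equiv.Perm ι) (γ : ι → ℂ) : Matrix ι ι ℂ :=
  fun j k => if k = π j then γ j else 0

variable (ι) in
def phasedPermMatrices : Set (Matrix ι ι ℂ) :=
  {N | ∃ (π : Equiv.Perm ι) (γ : ι → ℂ), (∀ j, ‖γ j‖ = 1) ∧ N = phasedPermMatrix π γ}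

lemma sum_norm_phasedPermMatrix_row (π : Equiv.Perm ι) (γ : ι → ℂ) (i : ι) :
    ∑ j, ‖phasedPermMatrix π γ i j‖ = ‖γ i‖ := by
  simp [phasedPermMatrix, apply_ite norm]

lemma sum_norm_phasedPermMatrix_col (π : Equiv.Perm ι) (γ : ι → ℂ) (j : ι) :
    ∑ i, ‖phasedPermMatrix π γ i j‖ = ‖γ (π.symm j)‖ := by
  simp [phasedPermMatrix, apply_ite norm, ← Equiv.symm_apply_eq]

lemma phasedPermMatrix_mem_convexHull (π : Equiv.Perm ι) {γ : ι → ℂ} (hγ : ∀ j, ‖γ j‖ ≤ 1) :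
    phasedPermMatrix π γ ∈ convexHull ℝ (phasedPermMatrices ι) := by
  have hlin : IsLinearMap ℝ (phasedPermMatrix π) :=
    ⟨fun _ _ => by ext; simp [phasedPermMatrix, ite_add_ite],
      fun _ _ => by ext; simp [phasedPermMatrix, smul_ite]⟩
  have hpoly : γ ∈ convexHull ℝ (univ.pi fun _ => Metric.sphere (0 : ℂ) 1) := by
    rw [convexHull_pi]
    intro j _
    rw [convexHull_sphere_eq_closedBall _ zero_le_one]
    simpa using hγ j
  refine hlin.mapsTo_convexHull ?_ hpoly
  intro γ hγ
  exact subset_convexHull ℝ _ ⟨π, γ, by simpa using hγ, rfl⟩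

lemma toBlocks₁₁_permMatrix_smul_mem_convexHull (σ : Equiv.Perm (ι ⊕ ι)) {U : Matrix ι ι ℂ}
    (hU : ∀ j k, ‖U j k‖ ≤ 1) :
    (fun j k => (σ.permMatrix ℝ).toBlocks₁₁ j k • U j k) ∈
      convexHull ℝ (phasedPermMatrices ι) := by
  obtain ⟨π, hπ⟩ := σ.exists_perm_apply_eq_of_apply_inl_eq_inl
  let γ : ι → ℂ := fun j => if σ (.inl j) = .inl (π j) then U j (π j) else 0
  have hγ : ∀ j, ‖γ j‖ ≤ 1 := fun j => by
    dsimp only [γ]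
    split_ifs
    exacts [hU _ _, by simp]
  suffices (fun j k => (σ.permMatrix ℝ).toBlocks₁₁ j k • U j k) = phasedPermMatrix π γ from
    this ▸ phasedPermMatrix_mem_convexHull π hγ
  ext j k
  by_cases h : σ (.inl j) = .inl k
  · obtain rfl := hπ j k h
    simp [toBlocks₁₁_permMatrix_apply, phasedPermMatrix, γ, h]
  · by_cases hk : k = π j
    · subst hk
      simp [toBlocks₁₁_permMatrix_apply, phasedPermMatrix, γ, h]
    · simp [toBlocks₁₁_permMatrix_apply, phasedPermMatrix, γ, h, hk]

theorem mem_convexHull_phasedPermMatrices {M : Matrix ι ι ℂ} (hrow : ∀ i, ∑ j, ‖M i j‖ ≤ 1)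
    (hcol : ∀ j, ∑ i, ‖M i j‖ ≤ 1) : M ∈ convexHull ℝ (phasedPermMatrices ι) := by
  let U : Matrix ι ι ℂ := fun j k => exp (arg (M j k) * I)
  have hlin : IsLinearMap ℝ fun A : Matrix ι ι ℝ => fun j k => A j k • U j k :=
    ⟨fun _ _ => by ext; simp [add_smul], fun _ _ => by ext; simp [mul_assoc]⟩
  have hpolar : M = fun j k => ‖M j k‖ • U j k := by
    ext j k
    simp [U, norm_mul_exp_arg_mul_I]
  have habs : (fun j k => ‖M j k‖ : Matrix ι ι ℝ) ∈
      convexHull ℝ (range fun σ : Equiv.Perm (ι ⊕ ι) => (σ.permMatrix ℝ).toBlocks₁₁) :=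
    mem_convexHull_toBlocks₁₁_permMatrix (fun _ _ => norm_nonneg _)
      (fun i => by simpa [mulVec, dotProduct] using hrow i)
      (fun j => by simpa [vecMul, dotProduct] using hcol j)
  rw [hpolar]
  refine hlin.mapsTo_convexHull ?_ habs
  rintro _ ⟨σ, rfl⟩
  exact toBlocks₁₁_permMatrix_smul_mem_convexHull σ fun j k => (norm_exp_ofReal_mul_I _).le

lemma convexHull_phasedPermMatrices_subset :
    convexHull ℝ (phasedPermMatrices ι) ⊆
      {N | (∀ i, ∑ j, ‖N i j‖ ≤ 1) ∧ ∀ j, ∑ i, ‖N i j‖ ≤ 1} := by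
  have hT : IsLinearMap ℝ (transpose : Matrix ι ι ℂ → Matrix ι ι ℂ) :=
    ⟨fun _ _ => rfl, fun _ _ => rfl⟩
  have hcol : Convex ℝ {N : Matrix ι ι ℂ | ∀ j, ∑ i, ‖N i j‖ ≤ 1} :=
    (convex_setOf_forall_sum_norm_le (E := ℂ)).is_linear_preimage hT
  refine convexHull_min ?_ (convex_setOf_forall_sum_norm_le.inter hcol)
  rintro _ ⟨π, γ, hγ, rfl⟩
  simp [sum_norm_phasedPermMatrix_row, sum_norm_phasedPermMatrix_col, hγ]

end PhasedPermMatrix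

theorem stmt_11 (n : ℕ) (M : Matrix (Fin n) (Fin n) ℂ) :
    IsCdss M ↔
      M ∈ convexHull ℝ
        {N : Matrix (Fin n) (Fin n) ℂ |
          ∃ (π : Equiv.Perm (Fin n)) (γ : Fin n → ℂ),
            (∀ j, ‖γ j‖ = 1) ∧ N = fun j k => if k = π j then γ j else 0} :=
  ⟨fun hM => mem_convexHull_phasedPermMatrices hM.1 hM.2,
    fun hM => convexHull_phasedPermMatrices_subset hM⟩
end

section
/- Let f : ℝ≥0 → ℂ satisfy f(0) = 0 and |f(x) - c·f(y)| ≤ K·|x - c·y| for all x, y ≥ 0 and all unimodular c ∈ ℂ. Let A, B be d × d complex matrices with SVDs A = U_A Σ_A V_A*, B = U_B Σ_B V_B*, and define f_s(A) = U_A f(Σ_A) V_A* (applying f entrywise to the diagonal of Σ_A), similarly for B. Then ‖f_s(A) - f_s(B)‖_F ≤ K·‖A - B‖_F. -/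
/-- The Frobenius (Hilbert–Schmidt) norm of a complex square matrix. -/
noncomputable def frobNorm {d : ℕ} (M : Matrix (Fin d) (Fin d) ℂ) : ℝ :=
  Real.sqrt (∑ i, ∑ j, ‖M i j‖ ^ 2)

/-!
Multiplying by `U_Aᴴ` on the left and `V_B` on the right, which preserves the Frobenius norm,
turns `f_s(A) - f_s(B)` into `f(Σ_A) Z - W f(Σ_B)` and `A - B` into `Σ_A Z - W Σ_B`, where
`Z = V_Aᴴ V_B` and `W = U_Aᴴ U_B` are unitary. Entrywise, the hypothesis on `f`, applied with the
rotation given by the phase of `z w̄`, yields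
`|f(a) z - w f(b)|² ≤ K² |a z - w b|² + (g(a) - g(b)) (|z|² - |w|²)`
with `g(x) = (|f(x)|² - K² x²) / 2`. Summed over all entries the correction terms cancel, since
every row and every column of a unitary matrix has norm one.
-/

open ComplexConjugate
open scoped Matrix

theorem norm_mul_sub_mul_sq (p q z w : ℂ) :
    ‖p * z - w * q‖ ^ 2 =
      ‖p‖ ^ 2 * ‖z‖ ^ 2 + ‖w‖ ^ 2 * ‖q‖ ^ 2 - 2 * (p * conj q * (z * conj w)).re := by
  simp only [Complex.sq_norm, Complex.normSq_sub, map_mul]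
  ring_nf

-- The paper's `‖f‖_{Lip-ℂ} ≤ K` for the restriction of `f` to `[0, ∞)`.
def RotationallyLipschitzWith (K : ℝ) (f : ℝ → ℂ) : Prop :=
  ∀ x y : ℝ, 0 ≤ x → 0 ≤ y → ∀ c : ℂ, ‖c‖ = 1 →
    ‖f x - c * f y‖ ≤ K * ‖(x : ℂ) - c * (y : ℂ)‖

namespace RotationallyLipschitzWith

variable {K : ℝ} {f : ℝ → ℂ}

theorem map_zero (hf : RotationallyLipschitzWith K f) : f 0 = 0 := by
  simpa using hf 0 0 le_rfl le_rfl (-1) (by simp)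

theorem norm_le (hf : RotationallyLipschitzWith K f) {x : ℝ} (hx : 0 ≤ x) :
    ‖f x‖ ≤ K * x := by
  simpa [hf.map_zero, abs_of_nonneg hx] using hf x 0 hx le_rfl 1 (by simp)

theorem nonneg (hf : RotationallyLipschitzWith K f) : 0 ≤ K := by
  simpa using (norm_nonneg _).trans (hf.norm_le zero_le_one)

theorem sq_norm_le (hf : RotationallyLipschitzWith K f) {x : ℝ} (hx : 0 ≤ x) :
    ‖f x‖ ^ 2 ≤ K ^ 2 * x ^ 2 := by
  rw [← mul_pow]
  exact pow_le_pow_left₀ (norm_nonneg _) (hf.norm_le hx) 2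

theorem sq_norm_sub_mul_le (hf : RotationallyLipschitzWith K f) {x y : ℝ} (hx : 0 ≤ x)
    (hy : 0 ≤ y) {c : ℂ} (hc : ‖c‖ = 1) :
    ‖f x‖ ^ 2 + ‖f y‖ ^ 2 - 2 * (f x * conj (f y) * conj c).re ≤
      K ^ 2 * (x ^ 2 + y ^ 2 - 2 * x * y * c.re) := by
  have h := pow_le_pow_left₀ (norm_nonneg _) (hf x y hx hy c hc) 2
  have hf_sq := norm_mul_sub_mul_sq (f x) (f y) 1 c
  have hid_sq := norm_mul_sub_mul_sq (x : ℂ) (y : ℂ) 1 c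
  simp only [mul_one, one_pow, hc, one_mul] at hf_sq hid_sq
  rw [mul_pow, hf_sq, hid_sq] at h
  simpa [Complex.mul_re, abs_of_nonneg hx, abs_of_nonneg hy, mul_assoc] using h

theorem sq_norm_mul_sub_mul_le (hf : RotationallyLipschitzWith K f) {a b : ℝ} (ha : 0 ≤ a)
    (hb : 0 ≤ b) (z w : ℂ) :
    ‖f a * z - w * f b‖ ^ 2 ≤ K ^ 2 * ‖(a : ℂ) * z - w * (b : ℂ)‖ ^ 2 +
      ((‖f a‖ ^ 2 - K ^ 2 * a ^ 2) / 2 - (‖f b‖ ^ 2 - K ^ 2 * b ^ 2) / 2) *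
        (‖z‖ ^ 2 - ‖w‖ ^ 2) := by
  set e := Complex.exp ((z * conj w).arg * Complex.I)
  have he : ‖conj e‖ = 1 := by simp [e, Complex.norm_exp_ofReal_mul_I]
  have hpolar : z * conj w = (‖z‖ * ‖w‖ : ℝ) * e := by
    rw [← Complex.norm_mul_exp_arg_mul_I (z * conj w)]
    simp [e]
  have h := hf.sq_norm_sub_mul_le ha hb he
  rw [Complex.conj_conj, Complex.conj_re] at h
  have hf_re : (f a * conj (f b) * (z * conj w)).re =
      ‖z‖ * ‖w‖ * (f a * conj (f b) * e).re := by
    rw [hpolar, mul_left_comm, Complex.re_ofReal_mul]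
  have hid_re : ((a : ℂ) * conj (b : ℂ) * (z * conj w)).re = ‖z‖ * ‖w‖ * (a * b * e.re) := by
    rw [hpolar, Complex.conj_ofReal, mul_left_comm, Complex.re_ofReal_mul]
    simp [Complex.mul_re]
  rw [norm_mul_sub_mul_sq, norm_mul_sub_mul_sq, hf_re, hid_re]
  simp only [Complex.norm_real, Real.norm_eq_abs, sq_abs]
  have hr := mul_le_mul_of_nonneg_left h (mul_nonneg (norm_nonneg z) (norm_nonneg w))
  -- AM-GM `2 ‖z‖ ‖w‖ ≤ ‖z‖² + ‖w‖²`, weighted by a nonpositive factor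
  have hamgm : (‖f a‖ ^ 2 + ‖f b‖ ^ 2 - K ^ 2 * (a ^ 2 + b ^ 2)) * (‖z‖ - ‖w‖) ^ 2 ≤ 0 :=
    mul_nonpos_of_nonpos_of_nonneg (by linarith [hf.sq_norm_le ha, hf.sq_norm_le hb])
      (sq_nonneg _)
  linarith

end RotationallyLipschitzWith

namespace Matrix

variable {𝕜 : Type*} [RCLike 𝕜] {m n : Type*} [Fintype n]

theorem re_mul_conjTranspose_apply_self (M : Matrix m n 𝕜) (i : m) :
    RCLike.re ((M * Mᴴ) i i) = ∑ j, ‖M i j‖ ^ 2 := by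
  simp only [mul_apply, conjTranspose_apply, RCLike.star_def, RCLike.mul_conj, map_sum]
  norm_cast

theorem re_conjTranspose_mul_apply_self (M : Matrix n m 𝕜) (j : m) :
    RCLike.re ((Mᴴ * M) j j) = ∑ i, ‖M i j‖ ^ 2 := by
  simp only [mul_apply, conjTranspose_apply, RCLike.star_def, RCLike.conj_mul, map_sum]
  norm_cast

variable [Fintype m]

theorem sum_sq_norm_eq_re_trace (M : Matrix m n 𝕜) :
    ∑ i, ∑ j, ‖M i j‖ ^ 2 = RCLike.re (Mᴴ * M).trace := by
  simp only [trace, diag_apply, map_sum, re_conjTranspose_mul_apply_self]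
  exact Finset.sum_comm

variable [DecidableEq n]

theorem sum_sq_norm_row_of_mem_unitaryGroup {U : Matrix n n 𝕜}
    (hU : U ∈ unitaryGroup n 𝕜) (i : n) : ∑ j, ‖U i j‖ ^ 2 = 1 := by
  rw [← re_mul_conjTranspose_apply_self, ← star_eq_conjTranspose,
    Unitary.mul_star_self_of_mem hU]
  simp

theorem sum_sq_norm_col_of_mem_unitaryGroup {U : Matrix n n 𝕜}
    (hU : U ∈ unitaryGroup n 𝕜) (j : n) : ∑ i, ‖U i j‖ ^ 2 = 1 := by
  rw [← re_conjTranspose_mul_apply_self, ← star_eq_conjTranspose,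
    Unitary.star_mul_self_of_mem hU]
  simp

theorem sum_sq_norm_unitary_mul {U : Matrix n n 𝕜} (hU : U ∈ unitaryGroup n 𝕜)
    (M : Matrix n m 𝕜) : ∑ i, ∑ j, ‖(U * M) i j‖ ^ 2 = ∑ i, ∑ j, ‖M i j‖ ^ 2 := by
  rw [sum_sq_norm_eq_re_trace, sum_sq_norm_eq_re_trace, conjTranspose_mul, Matrix.mul_assoc,
    ← Matrix.mul_assoc Uᴴ, ← star_eq_conjTranspose, Unitary.star_mul_self_of_mem hU,
    Matrix.one_mul]

theorem sum_sq_norm_mul_unitary {V : Matrix n n 𝕜} (hV : V ∈ unitaryGroup n 𝕜)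
    (M : Matrix m n 𝕜) : ∑ i, ∑ j, ‖(M * V) i j‖ ^ 2 = ∑ i, ∑ j, ‖M i j‖ ^ 2 := by
  rw [sum_sq_norm_eq_re_trace, sum_sq_norm_eq_re_trace, conjTranspose_mul, Matrix.mul_assoc,
    trace_mul_comm, Matrix.mul_assoc, Matrix.mul_assoc, ← star_eq_conjTranspose V,
    Unitary.mul_star_self_of_mem hV, Matrix.mul_one]

theorem sum_sub_mul_sq_norm_sub_eq_zero {Z W : Matrix n n 𝕜} (hZ : Z ∈ unitaryGroup n 𝕜)
    (hW : W ∈ unitaryGroup n 𝕜) (α β : n → ℝ) :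
    ∑ i, ∑ j, (α i - β j) * (‖Z i j‖ ^ 2 - ‖W i j‖ ^ 2) = 0 := by
  simp only [sub_mul, Finset.sum_sub_distrib]
  rw [Finset.sum_comm (f := fun i j => β j * _)]
  simp [← Finset.mul_sum, Finset.sum_sub_distrib, sum_sq_norm_row_of_mem_unitaryGroup hZ,
    sum_sq_norm_row_of_mem_unitaryGroup hW, sum_sq_norm_col_of_mem_unitaryGroup hZ,
    sum_sq_norm_col_of_mem_unitaryGroup hW]

theorem conjTranspose_mul_sub_mul_mul {α : Type*} [CommRing α] [StarRing α]
    {UA VA UB VB : Matrix n n α} (hUA : UA ∈ unitaryGroup n α) (hVB : VB ∈ unitaryGroup n α)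
    (D E : Matrix n n α) :
    UAᴴ * (UA * D * VAᴴ - UB * E * VBᴴ) * VB = D * (VAᴴ * VB) - UAᴴ * UB * E := by
  have hU : UAᴴ * UA = 1 := Unitary.star_mul_self_of_mem hUA
  have hV : VBᴴ * VB = 1 := Unitary.star_mul_self_of_mem hVB
  simp only [Matrix.mul_sub, Matrix.sub_mul, Matrix.mul_assoc, ← Matrix.mul_assoc UAᴴ UA, hU,
    hV, Matrix.one_mul, Matrix.mul_one]

end Matrix

open Matrix in
theorem RotationallyLipschitzWith.sum_sq_norm_diagonal_mul_sub_mul_diagonal_le {K : ℝ}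
    {f : ℝ → ℂ} (hf : RotationallyLipschitzWith K f) {n : Type*} [Fintype n] [DecidableEq n]
    {Z W : Matrix n n ℂ} (hZ : Z ∈ unitaryGroup n ℂ) (hW : W ∈ unitaryGroup n ℂ)
    {a b : n → ℝ} (ha : ∀ i, 0 ≤ a i) (hb : ∀ i, 0 ≤ b i) :
    ∑ i, ∑ j, ‖(diagonal (fun i => f (a i)) * Z - W * diagonal (fun j => f (b j))) i j‖ ^ 2 ≤
      K ^ 2 * ∑ i, ∑ j,
        ‖(diagonal (fun i => (a i : ℂ)) * Z - W * diagonal (fun j => (b j : ℂ))) i j‖ ^ 2 := by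
  simp only [Matrix.sub_apply, diagonal_mul, mul_diagonal, Finset.mul_sum]
  calc _ ≤ ∑ i, ∑ j, (K ^ 2 * ‖(a i : ℂ) * Z i j - W i j * (b j : ℂ)‖ ^ 2 +
          ((‖f (a i)‖ ^ 2 - K ^ 2 * a i ^ 2) / 2 - (‖f (b j)‖ ^ 2 - K ^ 2 * b j ^ 2) / 2) *
            (‖Z i j‖ ^ 2 - ‖W i j‖ ^ 2)) := by
        gcongr with i _ j _
        exact hf.sq_norm_mul_sub_mul_le (ha i) (hb j) _ _
    _ = _ := by
        rw [Finset.sum_congr rfl fun i _ => Finset.sum_add_distrib, Finset.sum_add_distrib,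
          sum_sub_mul_sq_norm_sub_eq_zero hZ hW (fun i => (‖f (a i)‖ ^ 2 - K ^ 2 * a i ^ 2) / 2)
            (fun j => (‖f (b j)‖ ^ 2 - K ^ 2 * b j ^ 2) / 2), add_zero]

theorem frobNorm_le_mul_of_sum_sq_le {d : ℕ} {K : ℝ} (hK : 0 ≤ K)
    {M N : Matrix (Fin d) (Fin d) ℂ}
    (h : ∑ i, ∑ j, ‖M i j‖ ^ 2 ≤ K ^ 2 * ∑ i, ∑ j, ‖N i j‖ ^ 2) :
    frobNorm M ≤ K * frobNorm N := by
  unfold frobNorm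
  rw [← Real.sqrt_sq hK, ← Real.sqrt_mul (sq_nonneg K)]
  exact Real.sqrt_le_sqrt h

theorem frobNorm_conjTranspose_mul_mul {d : ℕ} {U V : Matrix (Fin d) (Fin d) ℂ}
    (hU : U ∈ Matrix.unitaryGroup (Fin d) ℂ) (hV : V ∈ Matrix.unitaryGroup (Fin d) ℂ)
    (M : Matrix (Fin d) (Fin d) ℂ) : frobNorm (Uᴴ * M * V) = frobNorm M := by
  unfold frobNorm
  rw [Matrix.sum_sq_norm_mul_unitary hV,
    Matrix.sum_sq_norm_unitary_mul (U := Uᴴ) (Unitary.star_mem hU)]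

open Matrix in
theorem stmt_15_general (f : ℝ → ℂ) (K : ℝ)
    (hK : ∀ x y : ℝ, 0 ≤ x → 0 ≤ y → ∀ c : ℂ, ‖c‖ = 1 →
      ‖f x - c * f y‖ ≤ K * ‖(x : ℂ) - c * (y : ℂ)‖)
    (d : ℕ)
    (UA VA UB VB : Matrix (Fin d) (Fin d) ℂ)
    (hUA : UA ∈ Matrix.unitaryGroup (Fin d) ℂ)
    (hVA : VA ∈ Matrix.unitaryGroup (Fin d) ℂ)
    (hUB : UB ∈ Matrix.unitaryGroup (Fin d) ℂ)
    (hVB : VB ∈ Matrix.unitaryGroup (Fin d) ℂ)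
    (σA σB : Fin d → ℝ) (hσA : ∀ i, 0 ≤ σA i) (hσB : ∀ i, 0 ≤ σB i)
    (A B fsA fsB : Matrix (Fin d) (Fin d) ℂ)
    (hA : A = UA * Matrix.diagonal (fun i => (σA i : ℂ)) * VAᴴ)
    (hB : B = UB * Matrix.diagonal (fun i => (σB i : ℂ)) * VBᴴ)
    (hfsA : fsA = UA * Matrix.diagonal (fun i => f (σA i)) * VAᴴ)
    (hfsB : fsB = UB * Matrix.diagonal (fun i => f (σB i)) * VBᴴ) :
    frobNorm (fsA - fsB) ≤ K * frobNorm (A - B) := by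
  have hf : RotationallyLipschitzWith K f := hK
  rw [← frobNorm_conjTranspose_mul_mul hUA hVB, ← frobNorm_conjTranspose_mul_mul hUA hVB (A - B),
    hfsA, hfsB, hA, hB, conjTranspose_mul_sub_mul_mul hUA hVB,
    conjTranspose_mul_sub_mul_mul hUA hVB]
  exact frobNorm_le_mul_of_sum_sq_le hf.nonneg <|
    hf.sum_sq_norm_diagonal_mul_sub_mul_diagonal_le (mul_mem (Unitary.star_mem hVA) hVB)
      (mul_mem (Unitary.star_mem hUA) hUB) hσA hσB

open Matrix in
theorem stmt_15 (f : ℝ → ℂ) (K : ℝ) (h0 : f 0 = 0)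
    (hK : ∀ x y : ℝ, 0 ≤ x → 0 ≤ y → ∀ c : ℂ, ‖c‖ = 1 →
      ‖f x - c * f y‖ ≤ K * ‖(x : ℂ) - c * (y : ℂ)‖)
    (d : ℕ)
    (UA VA UB VB : Matrix (Fin d) (Fin d) ℂ)
    (hUA : UA ∈ Matrix.unitaryGroup (Fin d) ℂ)
    (hVA : VA ∈ Matrix.unitaryGroup (Fin d) ℂ)
    (hUB : UB ∈ Matrix.unitaryGroup (Fin d) ℂ)
    (hVB : VB ∈ Matrix.unitaryGroup (Fin d) ℂ)
    (σA σB : Fin d → ℝ) (hσA : ∀ i, 0 ≤ σA i) (hσB : ∀ i, 0 ≤ σB i)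
    (A B fsA fsB : Matrix (Fin d) (Fin d) ℂ)
    (hA : A = UA * Matrix.diagonal (fun i => (σA i : ℂ)) * VAᴴ)
    (hB : B = UB * Matrix.diagonal (fun i => (σB i : ℂ)) * VBᴴ)
    (hfsA : fsA = UA * Matrix.diagonal (fun i => f (σA i)) * VAᴴ)
    (hfsB : fsB = UB * Matrix.diagonal (fun i => f (σB i)) * VBᴴ) :
    frobNorm (fsA - fsB) ≤ K * frobNorm (A - B) :=
  stmt_15_general f K hK d UA VA UB VB hUA hVA hUB hVB σA σB hσA hσB A B fsA fsB hA hB hfsA hfsB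
end

section
/- If f : ℝ≥0 → ℝ is Lipschitz with constant L and f(0) = 0, then for all d × d complex matrices A and B, ‖f_s(A) - f_s(B)‖_F ≤ L·‖A - B‖_F, where f_s(A) = U f(Σ) V* for any singular value decomposition A = U Σ V*, with f applied to the singular values. -/
open Matrix

theorem sq_add_sq_swap_le {L x y a b : ℝ} (hsub : |x - y| ≤ L * |a - b|)
    (hadd : |x + y| ≤ L * |a + b|) (u v : ℝ) :
    (u * x - y * v) ^ 2 + (v * x - y * u) ^ 2 ≤
      L ^ 2 * ((u * a - b * v) ^ 2 + (v * a - b * u) ^ 2) := by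
  have polarize : ∀ s t : ℝ, (u * s - t * v) ^ 2 + (v * s - t * u) ^ 2 =
      ((u + v) ^ 2 * (s - t) ^ 2 + (u - v) ^ 2 * (s + t) ^ 2) / 2 := fun s t => by ring
  have hsub' : (x - y) ^ 2 ≤ L ^ 2 * (a - b) ^ 2 := by
    simpa only [sq_abs, mul_pow] using pow_le_pow_left₀ (abs_nonneg _) hsub 2
  have hadd' : (x + y) ^ 2 ≤ L ^ 2 * (a + b) ^ 2 := by
    simpa only [sq_abs, mul_pow] using pow_le_pow_left₀ (abs_nonneg _) hadd 2
  rw [polarize, polarize]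
  nlinarith [mul_le_mul_of_nonneg_left hsub' (sq_nonneg (u + v)),
    mul_le_mul_of_nonneg_left hadd' (sq_nonneg (u - v))]

theorem norm_sq_add_norm_sq_swap_le {L x y a b : ℝ} (hsub : |x - y| ≤ L * |a - b|)
    (hadd : |x + y| ≤ L * |a + b|) (w z : ℂ) :
    ‖w * x - y * z‖ ^ 2 + ‖z * x - y * w‖ ^ 2 ≤
      L ^ 2 * (‖w * a - b * z‖ ^ 2 + ‖z * a - b * w‖ ^ 2) := by
  have split : ∀ s t : ℝ, ‖w * s - t * z‖ ^ 2 + ‖z * s - t * w‖ ^ 2 =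
      ((w.re * s - t * z.re) ^ 2 + (z.re * s - t * w.re) ^ 2) +
        ((w.im * s - t * z.im) ^ 2 + (z.im * s - t * w.im) ^ 2) := fun s t => by
    simp only [Complex.sq_norm, Complex.normSq_apply, Complex.sub_re, Complex.sub_im,
      Complex.mul_re, Complex.mul_im, Complex.ofReal_re, Complex.ofReal_im]
    ring
  rw [split, split]
  linarith [sq_add_sq_swap_le hsub hadd w.re z.re, sq_add_sq_swap_le hsub hadd w.im z.im]

theorem norm_sq_sub_norm_sq_swap (w z : ℂ) (x y : ℝ) :
    ‖w * x - y * z‖ ^ 2 - ‖z * x - y * w‖ ^ 2 = (‖w‖ ^ 2 - ‖z‖ ^ 2) * (x ^ 2 - y ^ 2) := by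
  simp only [Complex.sq_norm, Complex.normSq_apply, Complex.sub_re, Complex.sub_im,
    Complex.mul_re, Complex.mul_im, Complex.ofReal_re, Complex.ofReal_im]
  ring

noncomputable def frobNormSq {m n : Type*} [Fintype m] [Fintype n] (M : Matrix m n ℂ) : ℝ :=
  ∑ i, ∑ j, ‖M i j‖ ^ 2

section FrobNormSq

variable {m n : Type*} [Fintype m] [Fintype n]

theorem frobNormSq_nonneg (M : Matrix m n ℂ) : 0 ≤ frobNormSq M := by
  unfold frobNormSq; positivity

omit [Fintype n] in
theorem re_conjTranspose_mul_self_apply (M : Matrix m n ℂ) (j : n) :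
    ((Mᴴ * M) j j).re = ∑ i, ‖M i j‖ ^ 2 := by
  simp only [mul_apply, conjTranspose_apply, Complex.re_sum, Complex.star_def,
    mul_comm (starRingEnd ℂ _), Complex.mul_conj', ← Complex.ofReal_pow, Complex.ofReal_re]

theorem frobNormSq_eq_re_trace (M : Matrix m n ℂ) : frobNormSq M = (Mᴴ * M).trace.re := by
  simp only [trace, diag, Complex.re_sum, re_conjTranspose_mul_self_apply, frobNormSq]
  exact Finset.sum_comm

theorem frobNormSq_unitary_mul [DecidableEq m] {U : Matrix m m ℂ} (hU : U ∈ unitaryGroup m ℂ)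
    (M : Matrix m n ℂ) : frobNormSq (U * M) = frobNormSq M := by
  have hU' : Uᴴ * U = 1 := mem_unitaryGroup_iff'.mp hU
  rw [frobNormSq_eq_re_trace, frobNormSq_eq_re_trace, conjTranspose_mul, Matrix.mul_assoc,
    ← Matrix.mul_assoc Uᴴ, hU', Matrix.one_mul]

variable [DecidableEq n]

theorem frobNormSq_mul_unitary {V : Matrix n n ℂ} (hV : V ∈ unitaryGroup n ℂ)
    (M : Matrix m n ℂ) : frobNormSq (M * V) = frobNormSq M := by
  have hV' : V * Vᴴ = 1 := mem_unitaryGroup_iff.mp hV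
  rw [frobNormSq_eq_re_trace, frobNormSq_eq_re_trace, conjTranspose_mul, Matrix.mul_assoc,
    trace_mul_comm]
  simp only [Matrix.mul_assoc, hV', Matrix.mul_one]

theorem sum_norm_sq_col_of_mem_unitaryGroup {U : Matrix n n ℂ} (hU : U ∈ unitaryGroup n ℂ)
    (j : n) : ∑ i, ‖U i j‖ ^ 2 = 1 := by
  have hU' : Uᴴ * U = 1 := mem_unitaryGroup_iff'.mp hU
  rw [← re_conjTranspose_mul_self_apply, hU', one_apply_eq, Complex.one_re]

theorem sum_norm_sq_row_of_mem_unitaryGroup {U : Matrix n n ℂ} (hU : U ∈ unitaryGroup n ℂ)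
    (i : n) : ∑ j, ‖U i j‖ ^ 2 = 1 := by
  simpa using sum_norm_sq_col_of_mem_unitaryGroup (Unitary.star_mem hU) i

end FrobNormSq

section Marginals

variable {m n : Type*} [Fintype m] [Fintype n]

theorem sum_sum_norm_sq_swap {W X : Matrix m n ℂ}
    (hcol : ∀ j, ∑ i, ‖W i j‖ ^ 2 = ∑ i, ‖X i j‖ ^ 2)
    (hrow : ∀ i, ∑ j, ‖W i j‖ ^ 2 = ∑ j, ‖X i j‖ ^ 2) (x : n → ℝ) (y : m → ℝ) :
    ∑ i, ∑ j, ‖W i j * x j - y i * X i j‖ ^ 2 = ∑ i, ∑ j, ‖X i j * x j - y i * W i j‖ ^ 2 := by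
  rw [← sub_eq_zero, ← Finset.sum_sub_distrib]
  simp_rw [← Finset.sum_sub_distrib, norm_sq_sub_norm_sq_swap, mul_sub, Finset.sum_sub_distrib]
  have hx : ∑ i, ∑ j, (‖W i j‖ ^ 2 - ‖X i j‖ ^ 2) * x j ^ 2 = 0 := by
    rw [Finset.sum_comm]
    simp [← Finset.sum_mul, Finset.sum_sub_distrib, hcol]
  have hy : ∀ i, ∑ j, (‖W i j‖ ^ 2 - ‖X i j‖ ^ 2) * y i ^ 2 = 0 := fun i => by
    simp [← Finset.sum_mul, Finset.sum_sub_distrib, hrow]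
  simp [hx, hy]

variable [DecidableEq m] [DecidableEq n]

theorem frobNormSq_mul_diagonal_sub_diagonal_mul_le {W X : Matrix m n ℂ}
    (hcol : ∀ j, ∑ i, ‖W i j‖ ^ 2 = ∑ i, ‖X i j‖ ^ 2)
    (hrow : ∀ i, ∑ j, ‖W i j‖ ^ 2 = ∑ j, ‖X i j‖ ^ 2) {L : ℝ} {x a : n → ℝ} {y b : m → ℝ}
    (hsub : ∀ i j, |x j - y i| ≤ L * |a j - b i|) (hadd : ∀ i j, |x j + y i| ≤ L * |a j + b i|) :
    frobNormSq (W * diagonal (fun j => (x j : ℂ)) - diagonal (fun i => (y i : ℂ)) * X) ≤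
      L ^ 2 *
        frobNormSq (W * diagonal (fun j => (a j : ℂ)) - diagonal (fun i => (b i : ℂ)) * X) := by
  have entries : ∀ (s : n → ℝ) (t : m → ℝ),
      frobNormSq (W * diagonal (fun j => (s j : ℂ)) - diagonal (fun i => (t i : ℂ)) * X) =
        ∑ i, ∑ j, ‖W i j * s j - t i * X i j‖ ^ 2 := fun s t => by
    simp [frobNormSq, mul_diagonal, diagonal_mul]
  have pointwise : ∑ i, ∑ j, (‖W i j * x j - y i * X i j‖ ^ 2 + ‖X i j * x j - y i * W i j‖ ^ 2)
      ≤ ∑ i, ∑ j, L ^ 2 * (‖W i j * a j - b i * X i j‖ ^ 2 + ‖X i j * a j - b i * W i j‖ ^ 2) :=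
    Finset.sum_le_sum fun i _ => Finset.sum_le_sum fun j _ =>
      norm_sq_add_norm_sq_swap_le (hsub i j) (hadd i j) _ _
  simp only [Finset.sum_add_distrib, ← Finset.mul_sum, ← sum_sum_norm_sq_swap hcol hrow]
    at pointwise
  rw [entries, entries]
  linarith

end Marginals

section SingularValueDecomposition

variable {n : Type*} [Fintype n] [DecidableEq n] {U V U' V' : Matrix n n ℂ}

theorem frobNormSq_unitary_conj_sub_eq (hU' : U' ∈ unitaryGroup n ℂ) (hV : V ∈ unitaryGroup n ℂ)
    (D D' : Matrix n n ℂ) :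
    frobNormSq (U * D * Vᴴ - U' * D' * V'ᴴ) = frobNormSq (U'ᴴ * U * D - D' * (V'ᴴ * V)) := by
  have hU'₁ : U'ᴴ * U' = 1 := mem_unitaryGroup_iff'.mp hU'
  have hV₁ : Vᴴ * V = 1 := mem_unitaryGroup_iff'.mp hV
  rw [← frobNormSq_unitary_mul (Unitary.star_mem hU'), ← frobNormSq_mul_unitary hV,
    star_eq_conjTranspose]
  simp only [Matrix.mul_sub, Matrix.sub_mul, Matrix.mul_assoc, hV₁, Matrix.mul_one]
  simp only [← Matrix.mul_assoc, hU'₁, Matrix.one_mul]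

theorem frobNormSq_unitary_diagonal_sub_le (hU : U ∈ unitaryGroup n ℂ)
    (hV : V ∈ unitaryGroup n ℂ) (hU' : U' ∈ unitaryGroup n ℂ) (hV' : V' ∈ unitaryGroup n ℂ)
    {L : ℝ} {x a y b : n → ℝ}
    (hsub : ∀ i j, |x j - y i| ≤ L * |a j - b i|) (hadd : ∀ i j, |x j + y i| ≤ L * |a j + b i|) :
    frobNormSq (U * diagonal (fun i => (x i : ℂ)) * Vᴴ - U' * diagonal (fun i => (y i : ℂ)) * V'ᴴ)
      ≤ L ^ 2 * frobNormSq
        (U * diagonal (fun i => (a i : ℂ)) * Vᴴ - U' * diagonal (fun i => (b i : ℂ)) * V'ᴴ) := by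
  have hW : U'ᴴ * U ∈ unitaryGroup n ℂ := mul_mem (Unitary.star_mem hU') hU
  have hX : V'ᴴ * V ∈ unitaryGroup n ℂ := mul_mem (Unitary.star_mem hV') hV
  rw [frobNormSq_unitary_conj_sub_eq hU' hV, frobNormSq_unitary_conj_sub_eq hU' hV]
  refine frobNormSq_mul_diagonal_sub_diagonal_mul_le (fun j => ?_) (fun i => ?_) hsub hadd
  · rw [sum_norm_sq_col_of_mem_unitaryGroup hW, sum_norm_sq_col_of_mem_unitaryGroup hX]
  · rw [sum_norm_sq_row_of_mem_unitaryGroup hW, sum_norm_sq_row_of_mem_unitaryGroup hX]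

end SingularValueDecomposition

theorem abs_add_le_of_lipschitz_nonneg {f : ℝ → ℝ} {L : ℝ} (h0 : f 0 = 0)
    (hf : ∀ x y : ℝ, 0 ≤ x → 0 ≤ y → |f x - f y| ≤ L * |x - y|) {a b : ℝ} (ha : 0 ≤ a)
    (hb : 0 ≤ b) : |f a + f b| ≤ L * |a + b| := by
  have bound : ∀ s, 0 ≤ s → |f s| ≤ L * s := fun s hs => by
    simpa [h0, abs_of_nonneg hs] using hf s 0 hs le_rfl
  calc |f a + f b| ≤ |f a| + |f b| := abs_add_le _ _
    _ ≤ L * a + L * b := add_le_add (bound a ha) (bound b hb)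
    _ = L * |a + b| := by rw [abs_of_nonneg (add_nonneg ha hb)]; ring

open Matrix in
theorem stmt_16 (f : ℝ → ℝ) (L : ℝ) (hL : 0 ≤ L) (h0 : f 0 = 0)
    (hf : ∀ x y : ℝ, 0 ≤ x → 0 ≤ y → |f x - f y| ≤ L * |x - y|)
    (d : ℕ)
    (UA VA UB VB : Matrix (Fin d) (Fin d) ℂ)
    (hUA : UA ∈ Matrix.unitaryGroup (Fin d) ℂ)
    (hVA : VA ∈ Matrix.unitaryGroup (Fin d) ℂ)
    (hUB : UB ∈ Matrix.unitaryGroup (Fin d) ℂ)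
    (hVB : VB ∈ Matrix.unitaryGroup (Fin d) ℂ)
    (σA σB : Fin d → ℝ) (hσA : ∀ i, 0 ≤ σA i) (hσB : ∀ i, 0 ≤ σB i)
    (A B fsA fsB : Matrix (Fin d) (Fin d) ℂ)
    (hA : A = UA * Matrix.diagonal (fun i => (σA i : ℂ)) * VAᴴ)
    (hB : B = UB * Matrix.diagonal (fun i => (σB i : ℂ)) * VBᴴ)
    (hfsA : fsA = UA * Matrix.diagonal (fun i => (f (σA i) : ℂ)) * VAᴴ)
    (hfsB : fsB = UB * Matrix.diagonal (fun i => (f (σB i) : ℂ)) * VBᴴ) :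
    frobNorm (fsA - fsB) ≤ L * frobNorm (A - B) := by
  have hsq : frobNormSq (fsA - fsB) ≤ L ^ 2 * frobNormSq (A - B) := by
    rw [hA, hB, hfsA, hfsB]
    exact frobNormSq_unitary_diagonal_sub_le hUA hVA hUB hVB
      (fun i j => hf _ _ (hσA j) (hσB i))
      (fun i j => abs_add_le_of_lipschitz_nonneg h0 hf (hσA j) (hσB i))
  calc frobNorm (fsA - fsB) = √(frobNormSq (fsA - fsB)) := rfl
    _ ≤ √(L ^ 2 * frobNormSq (A - B)) := Real.sqrt_le_sqrt hsq
    _ = L * frobNorm (A - B) := by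
      rw [Real.sqrt_mul' _ (frobNormSq_nonneg _), Real.sqrt_sq hL]
      rfl
end

section
/- If f : ℝ≥0 → ℂ is Lipschitz with constant L and f(0) = 0, then for all d × d complex matrices A and B, ‖f_s(A) - f_s(B)‖_F ≤ √2·L·‖A - B‖_F, and the constant √2 cannot be replaced by any smaller constant valid for all such Lipschitz f. -/
open Matrix

/-- Data of a singular value decomposition of a `d × d` complex matrix:
unitaries `U`, `V` and nonnegative singular values `σ`. -/
structure SVDData (d : ℕ) where
  U : Matrix (Fin d) (Fin d) ℂ
  V : Matrix (Fin d) (Fin d) ℂ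
  σ : Fin d → ℝ
  hU : U ∈ Matrix.unitaryGroup (Fin d) ℂ
  hV : V ∈ Matrix.unitaryGroup (Fin d) ℂ
  hσ : ∀ i, 0 ≤ σ i

/-- The matrix `U Σ V*` determined by the SVD data. -/
noncomputable def SVDData.matrix {d : ℕ} (S : SVDData d) : Matrix (Fin d) (Fin d) ℂ :=
  S.U * Matrix.diagonal (fun i => (S.σ i : ℂ)) * (S.V)ᴴ

/-- The singular value functional calculus `f_s`: apply `f` to the singular values. -/
noncomputable def SVDData.apply {d : ℕ} (S : SVDData d) (f : ℝ → ℂ) :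
    Matrix (Fin d) (Fin d) ℂ :=
  S.U * Matrix.diagonal (fun i => f (S.σ i)) * (S.V)ᴴ

/-!
For `A = U Σ V*`, the unitary `W = (U U; V -V) / √2` diagonalizes the Hermitian dilation
`[[0, A], [A*, 0]]` with eigenvalues `(Σ, -Σ)`. Applying the odd extension `g` of `f` (odd since
`f 0 = 0`) in this eigenbasis gives `[[0, f_s(A)], [V f(Σ) U*, 0]]`. For matrices
`P diag(x) P*` and `R diag(y) R*` with `P`, `R` unitary, the squared Frobenius distance is
`∑ |(P* R)ᵢₖ|² |xᵢ - yₖ|²`, so an `L`-Lipschitz `g` acts `L`-Lipschitzly on them. The two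
dilations differ by `2 ‖A - B‖²` in squared norm; for complex `f` the lower-left block is not
`f_s(A)*`, so it can only be dropped, which costs the factor `√2`.

For sharpness take `d = 1`, `f(x) = min(x, 1) + i max(x - 1, 0)`, `A = 1` and `B = u (1 + 2θ)`
with `u = w / w̄`, `w = 1 + iθ`: then `‖f_s(A) - f_s(B)‖ / ‖A - B‖ = |θ - 2i| / |1 + (1 + θ) i|`,
which tends to `2 / √2 = √2` as `θ → 0`.
-/

section Frobenius

variable {m n : Type*} [Fintype m] [Fintype n]

noncomputable def frobSq (M : Matrix m n ℂ) : ℝ :=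
  ∑ i, ∑ j, ‖M i j‖ ^ 2

lemma frobNorm_eq_sqrt_frobSq {d : ℕ} (M : Matrix (Fin d) (Fin d) ℂ) :
    frobNorm M = √(frobSq M) := rfl

lemma frobSq_nonneg (M : Matrix m n ℂ) : 0 ≤ frobSq M := by
  unfold frobSq; positivity

lemma frobSq_zero : frobSq (0 : Matrix m n ℂ) = 0 := by
  simp [frobSq]

lemma frobSq_conjTranspose (M : Matrix m n ℂ) : frobSq Mᴴ = frobSq M := by
  unfold frobSq
  rw [Finset.sum_comm]
  simp

lemma ofReal_frobSq (M : Matrix m n ℂ) : (frobSq M : ℂ) = trace (Mᴴ * M) := by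
  simp only [frobSq, trace, diag, mul_apply, conjTranspose_apply, Complex.ofReal_sum,
    Complex.ofReal_pow, ← Complex.conj_mul', RCLike.star_def]
  exact Finset.sum_comm

lemma frobSq_unitary_mul [DecidableEq m] {U : Matrix m m ℂ} (hU : U ∈ unitaryGroup m ℂ)
    (M : Matrix m n ℂ) : frobSq (U * M) = frobSq M := by
  have h : (frobSq (U * M) : ℂ) = frobSq M := by
    rw [ofReal_frobSq, ofReal_frobSq, conjTranspose_mul, Matrix.mul_assoc,
      ← Matrix.mul_assoc Uᴴ, ← star_eq_conjTranspose, Unitary.star_mul_self_of_mem hU,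
      Matrix.one_mul]
  exact_mod_cast h

lemma frobSq_mul_unitary [DecidableEq n] {U : Matrix n n ℂ} (hU : U ∈ unitaryGroup n ℂ)
    (M : Matrix m n ℂ) : frobSq (M * U) = frobSq M := by
  rw [← frobSq_conjTranspose, conjTranspose_mul, ← star_eq_conjTranspose U,
    frobSq_unitary_mul (Unitary.star_mem hU), frobSq_conjTranspose]

lemma frobSq_fromBlocks {l o : Type*} [Fintype l] [Fintype o] (A : Matrix n l ℂ)
    (B : Matrix n m ℂ) (C : Matrix o l ℂ) (D : Matrix o m ℂ) :
    frobSq (fromBlocks A B C D) = frobSq A + frobSq B + (frobSq C + frobSq D) := by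
  simp only [frobSq, Fintype.sum_sum_type, fromBlocks_apply₁₁, fromBlocks_apply₁₂,
    fromBlocks_apply₂₁, fromBlocks_apply₂₂, Finset.sum_add_distrib]
  ring

end Frobenius

lemma diagonal_mul_sub_mul_diagonal {m n α : Type*} [Fintype m] [Fintype n] [DecidableEq m]
    [DecidableEq n] [CommRing α] (x : m → α) (y : n → α) (Q : Matrix m n α) :
    diagonal x * Q - Q * diagonal y = of fun i k => (x i - y k) * Q i k := by
  ext i k
  simp only [Matrix.sub_apply, diagonal_mul, mul_diagonal, of_apply]
  ring

lemma diagonal_mem_unitaryGroup {n : Type*} [Fintype n] [DecidableEq n] {v : n → ℂ}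
    (hv : ∀ i, ‖v i‖ = 1) : diagonal v ∈ unitaryGroup n ℂ := by
  rw [mem_unitaryGroup_iff, star_eq_conjTranspose, diagonal_conjTranspose, diagonal_mul_diagonal,
    ← diagonal_one]
  congr 1
  ext i
  simp [Complex.mul_conj', hv]

section Normal

variable {n : Type*} [Fintype n] [DecidableEq n] {P R : Matrix n n ℂ}

/-- `P diag(x) P* - R diag(y) R* = P (diag(x) Q - Q diag(y)) R*` with `Q = P* R`. -/
lemma frobSq_conj_sub_conj (hP : P ∈ unitaryGroup n ℂ) (hR : R ∈ unitaryGroup n ℂ)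
    (x y : n → ℂ) :
    frobSq (P * diagonal x * Pᴴ - R * diagonal y * Rᴴ)
      = ∑ i, ∑ k, ‖x i - y k‖ ^ 2 * ‖(Pᴴ * R) i k‖ ^ 2 := by
  have hPP : P * Pᴴ = 1 := Unitary.mul_star_self_of_mem hP
  have hRR : R * Rᴴ = 1 := Unitary.mul_star_self_of_mem hR
  have h : P * diagonal x * Pᴴ - R * diagonal y * Rᴴ
      = P * (diagonal x * (Pᴴ * R) - Pᴴ * R * diagonal y) * Rᴴ := by
    simp only [Matrix.mul_sub, Matrix.sub_mul, ← Matrix.mul_assoc, hPP, Matrix.one_mul]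
    simp only [Matrix.mul_assoc, hRR, Matrix.mul_one]
  have hR' : Rᴴ ∈ unitaryGroup n ℂ := Unitary.star_mem hR
  rw [h, frobSq_mul_unitary hR', frobSq_unitary_mul hP, diagonal_mul_sub_mul_diagonal]
  simp only [frobSq, of_apply, norm_mul, mul_pow]

theorem frobSq_conj_sub_conj_le (hP : P ∈ unitaryGroup n ℂ) (hR : R ∈ unitaryGroup n ℂ)
    {L : ℝ} {x y x' y' : n → ℂ} (h : ∀ i k, ‖x i - y k‖ ≤ L * ‖x' i - y' k‖) :
    frobSq (P * diagonal x * Pᴴ - R * diagonal y * Rᴴ)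
      ≤ L ^ 2 * frobSq (P * diagonal x' * Pᴴ - R * diagonal y' * Rᴴ) := by
  rw [frobSq_conj_sub_conj hP hR, frobSq_conj_sub_conj hP hR, Finset.mul_sum]
  refine Finset.sum_le_sum fun i _ => ?_
  rw [Finset.mul_sum]
  refine Finset.sum_le_sum fun k _ => ?_
  rw [← mul_assoc, ← mul_pow L]
  exact mul_le_mul_of_nonneg_right (pow_le_pow_left₀ (norm_nonneg _) (h i k) 2) (sq_nonneg _)

end Normal

lemma fromBlocks_sub {l m n o α : Type*} [Sub α] (A A' : Matrix n l α) (B B' : Matrix n m α)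
    (C C' : Matrix o l α) (D D' : Matrix o m α) :
    fromBlocks A B C D - fromBlocks A' B' C' D'
      = fromBlocks (A - A') (B - B') (C - C') (D - D') := by
  ext (i | i) (j | j) <;> rfl

section Dilation

variable {n : Type*} [Fintype n]

noncomputable def dilationUnitary (U V : Matrix n n ℂ) : Matrix (n ⊕ n) (n ⊕ n) ℂ :=
  (√2)⁻¹ • fromBlocks U U V (-V)

lemma dilationUnitary_conj (U V D₀ D₁ : Matrix n n ℂ) :
    dilationUnitary U V * fromBlocks D₀ 0 0 D₁ * (dilationUnitary U V)ᴴ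
      = (2 : ℝ)⁻¹ • fromBlocks (U * (D₀ + D₁) * Uᴴ) (U * (D₀ - D₁) * Vᴴ)
          (V * (D₀ - D₁) * Uᴴ) (V * (D₀ + D₁) * Vᴴ) := by
  have hr : (√2)⁻¹ * (√2)⁻¹ = (2 : ℝ)⁻¹ := by
    rw [← mul_inv, Real.mul_self_sqrt zero_le_two]
  simp only [dilationUnitary, conjTranspose_smul, star_trivial, Matrix.smul_mul, Matrix.mul_smul,
    smul_smul, hr, fromBlocks_conjTranspose, fromBlocks_multiply, conjTranspose_neg]
  congr 1
  simp only [Matrix.mul_zero, add_zero, zero_add, Matrix.mul_add, Matrix.add_mul, Matrix.mul_neg,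
    Matrix.neg_mul, neg_neg, sub_eq_add_neg]

lemma dilationUnitary_conj_fromBlocks_neg (U V D : Matrix n n ℂ) :
    dilationUnitary U V * fromBlocks D 0 0 (-D) * (dilationUnitary U V)ᴴ
      = fromBlocks 0 (U * D * Vᴴ) (V * D * Uᴴ) 0 := by
  rw [dilationUnitary_conj, add_neg_cancel, sub_neg_eq_add, ← two_smul ℝ D]
  simp [fromBlocks_smul, Matrix.mul_smul, Matrix.smul_mul]

lemma dilationUnitary_mem_unitaryGroup [DecidableEq n] {U V : Matrix n n ℂ}
    (hU : U ∈ unitaryGroup n ℂ) (hV : V ∈ unitaryGroup n ℂ) :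
    dilationUnitary U V ∈ unitaryGroup (n ⊕ n) ℂ := by
  have h := dilationUnitary_conj U V 1 1
  rw [fromBlocks_one, Matrix.mul_one] at h
  have hUU : U * Uᴴ = 1 := Unitary.mul_star_self_of_mem hU
  have hVV : V * Vᴴ = 1 := Unitary.mul_star_self_of_mem hV
  rw [mem_unitaryGroup_iff, star_eq_conjTranspose, h]
  simp [← two_smul ℝ (1 : Matrix n n ℂ), fromBlocks_smul, hUU, hVV]

end Dilation

noncomputable def oddExt (f : ℝ → ℂ) (x : ℝ) : ℂ :=
  if 0 ≤ x then f x else -f (-x)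

section OddExt

variable {f : ℝ → ℂ}

lemma oddExt_of_nonneg {x : ℝ} (hx : 0 ≤ x) : oddExt f x = f x := if_pos hx

lemma oddExt_of_neg {x : ℝ} (hx : x < 0) : oddExt f x = -f (-x) := if_neg hx.not_ge

lemma oddExt_neg (hf0 : f 0 = 0) (x : ℝ) : oddExt f (-x) = -oddExt f x := by
  rcases lt_trichotomy x 0 with hx | rfl | hx
  · rw [oddExt_of_nonneg (by linarith), oddExt_of_neg hx, neg_neg]
  · simp [oddExt, hf0]
  · rw [oddExt_of_neg (by linarith), oddExt_of_nonneg hx.le, neg_neg]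

lemma norm_oddExt_sub_le (hf0 : f 0 = 0) {L : ℝ}
    (hf : ∀ x y, 0 ≤ x → 0 ≤ y → ‖f x - f y‖ ≤ L * |x - y|) (x y : ℝ) :
    ‖oddExt f x - oddExt f y‖ ≤ L * |x - y| := by
  have hnonneg : ∀ x y, 0 ≤ x → ‖oddExt f x - oddExt f y‖ ≤ L * |x - y| := by
    intro x y hx
    rcases le_or_gt 0 y with hy | hy
    · rw [oddExt_of_nonneg hx, oddExt_of_nonneg hy]
      exact hf x y hx hy
    · have hx0 := hf x 0 hx le_rfl
      have hy0 := hf (-y) 0 (by linarith) le_rfl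
      simp only [hf0, sub_zero] at hx0 hy0
      rw [oddExt_of_nonneg hx, oddExt_of_neg hy, sub_neg_eq_add]
      calc ‖f x + f (-y)‖ ≤ ‖f x‖ + ‖f (-y)‖ := norm_add_le _ _
        _ ≤ L * |x| + L * |-y| := add_le_add hx0 hy0
        _ = L * |x - y| := by
          rw [abs_of_nonneg hx, abs_of_pos (neg_pos.2 hy), abs_of_pos (by linarith)]
          ring
  rcases le_or_gt 0 x with hx | hx
  · exact hnonneg x y hx
  · have h := hnonneg (-x) (-y) (by linarith)
    rwa [oddExt_neg hf0, oddExt_neg hf0, neg_sub_neg, norm_sub_rev, neg_sub_neg, abs_sub_comm] at h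

end OddExt

namespace SVDData

variable {d : ℕ}

lemma matrix_eq_apply (S : SVDData d) : S.matrix = S.apply Complex.ofReal := rfl

lemma apply_congr {f g : ℝ → ℂ} (h : ∀ x, 0 ≤ x → f x = g x) (S : SVDData d) :
    S.apply f = S.apply g := by
  simp only [apply, fun i => h _ (S.hσ i)]

def conjTranspose (S : SVDData d) : SVDData d :=
  ⟨S.V, S.U, S.σ, S.hV, S.hU, S.hσ⟩

lemma conjTranspose_matrix (S : SVDData d) : S.conjTranspose.matrix = S.matrixᴴ := by
  simp [matrix, conjTranspose, Matrix.conjTranspose_mul, Matrix.mul_assoc, Pi.star_def]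

lemma dilationUnitary_conj_diagonal {g : ℝ → ℂ} (hg : ∀ x, g (-x) = -g x) (S : SVDData d) :
    dilationUnitary S.U S.V * diagonal (fun i => g (Sum.elim S.σ (-S.σ) i))
        * (dilationUnitary S.U S.V)ᴴ
      = fromBlocks 0 (S.apply g) (S.conjTranspose.apply g) 0 := by
  have h : (fun i => g (Sum.elim S.σ (-S.σ) i))
      = Sum.elim (fun i => g (S.σ i)) (fun i => -g (S.σ i)) := by
    ext (i | i) <;> simp [hg]
  rw [h, ← fromBlocks_diagonal, ← diagonal_neg, dilationUnitary_conj_fromBlocks_neg]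
  rfl

theorem frobSq_apply_sub_apply_add_le {g : ℝ → ℂ} (hg : ∀ x, g (-x) = -g x) {L : ℝ}
    (hgL : ∀ x y, ‖g x - g y‖ ≤ L * |x - y|) (S T : SVDData d) :
    frobSq (S.apply g - T.apply g) + frobSq (S.conjTranspose.apply g - T.conjTranspose.apply g)
      ≤ 2 * L ^ 2 * frobSq (S.matrix - T.matrix) := by
  have h := frobSq_conj_sub_conj_le (dilationUnitary_mem_unitaryGroup S.hU S.hV)
    (dilationUnitary_mem_unitaryGroup T.hU T.hV) (L := L)
    (x := fun i => g (Sum.elim S.σ (-S.σ) i)) (y := fun i => g (Sum.elim T.σ (-T.σ) i))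
    (x' := fun i => Complex.ofReal (Sum.elim S.σ (-S.σ) i))
    (y' := fun i => Complex.ofReal (Sum.elim T.σ (-T.σ) i))
    fun i k => by
      simpa only [← Complex.ofReal_sub, Complex.norm_real, Real.norm_eq_abs] using hgL _ _
  rw [dilationUnitary_conj_diagonal hg, dilationUnitary_conj_diagonal hg,
    dilationUnitary_conj_diagonal Complex.ofReal_neg,
    dilationUnitary_conj_diagonal Complex.ofReal_neg, fromBlocks_sub, fromBlocks_sub,
    frobSq_fromBlocks, frobSq_fromBlocks, ← matrix_eq_apply, ← matrix_eq_apply,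
    ← matrix_eq_apply, ← matrix_eq_apply, conjTranspose_matrix, conjTranspose_matrix,
    ← Matrix.conjTranspose_sub, frobSq_conjTranspose, sub_zero, frobSq_zero] at h
  linarith

theorem frobNorm_apply_sub_apply_le {f : ℝ → ℂ} {L : ℝ} (hf0 : f 0 = 0)
    (hf : ∀ x y, 0 ≤ x → 0 ≤ y → ‖f x - f y‖ ≤ L * |x - y|) (S T : SVDData d) :
    frobNorm (S.apply f - T.apply f) ≤ √2 * L * frobNorm (S.matrix - T.matrix) := by
  have hL : 0 ≤ L := by simpa [hf0] using (norm_nonneg _).trans (hf 1 0 zero_le_one le_rfl)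
  have h := frobSq_apply_sub_apply_add_le (oddExt_neg hf0) (norm_oddExt_sub_le hf0 hf) S T
  simp only [apply_congr fun x hx => oddExt_of_nonneg (f := f) hx] at h
  have hsq : frobSq (S.apply f - T.apply f) ≤ (√2 * L) ^ 2 * frobSq (S.matrix - T.matrix) := by
    rw [mul_pow, Real.sq_sqrt zero_le_two]
    linarith [frobSq_nonneg (S.conjTranspose.apply f - T.conjTranspose.apply f)]
  rw [frobNorm_eq_sqrt_frobSq, frobNorm_eq_sqrt_frobSq, ← Real.sqrt_sq (by positivity : 0 ≤ √2 * L),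
    ← Real.sqrt_mul (sq_nonneg _)]
  exact Real.sqrt_le_sqrt hsq

end SVDData

section Sharpness

open Complex ComplexConjugate

noncomputable def bendAtOne (x : ℝ) : ℂ :=
  (min x 1 : ℝ) + (max (x - 1) 0 : ℝ) * I

lemma bendAtOne_zero : bendAtOne 0 = 0 := by
  simp [bendAtOne]

lemma bendAtOne_one : bendAtOne 1 = 1 := by
  simp [bendAtOne]

lemma bendAtOne_one_add {t : ℝ} (ht : 0 ≤ t) : bendAtOne (1 + t) = 1 + t * I := by
  simp [bendAtOne, ht]

lemma norm_bendAtOne_sub_le (x y : ℝ) : ‖bendAtOne x - bendAtOne y‖ ≤ |x - y| := by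
  wlog hyx : y ≤ x generalizing x y
  · rw [norm_sub_rev, abs_sub_comm]
    exact this y x (le_of_not_ge hyx)
  refine (norm_le_abs_re_add_abs_im _).trans ?_
  have hre : 0 ≤ min x 1 - min y 1 := sub_nonneg.2 (min_le_min_right 1 hyx)
  have him : 0 ≤ max (x - 1) 0 - max (y - 1) 0 := sub_nonneg.2 (max_le_max_right 0 (by linarith))
  have hsplit (z : ℝ) : min z 1 + max (z - 1) 0 = z := by
    rcases le_total z 1 with hz | hz
    · rw [min_eq_left hz, max_eq_right (by linarith)]; ring
    · rw [min_eq_right hz, max_eq_left (by linarith)]; ring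
  simp only [bendAtOne, sub_re, add_re, sub_im, add_im, ofReal_re, ofReal_im, mul_re, mul_im,
    I_re, I_im, mul_zero, mul_one, sub_zero, add_zero, zero_add]
  rw [abs_of_nonneg hre, abs_of_nonneg him, abs_of_nonneg (sub_nonneg.2 hyx)]
  linarith [hsplit x, hsplit y]

namespace SVDData

noncomputable def ofPolar (u : ℂ) (hu : ‖u‖ = 1) (s : ℝ) (hs : 0 ≤ s) : SVDData 1 :=
  ⟨diagonal fun _ => u, 1, fun _ => s, diagonal_mem_unitaryGroup fun _ => hu, one_mem _,
    fun _ => hs⟩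

lemma frobNorm_ofPolar_apply_sub (f : ℝ → ℂ) {u v : ℂ} (hu : ‖u‖ = 1) (hv : ‖v‖ = 1) {s t : ℝ}
    (hs : 0 ≤ s) (ht : 0 ≤ t) :
    frobNorm ((ofPolar u hu s hs).apply f - (ofPolar v hv t ht).apply f) = ‖u * f s - v * f t‖ := by
  simp [frobNorm, apply, ofPolar, Real.sqrt_sq]

end SVDData

lemma norm_sub_two_mul_I_le_of_forall_frobNorm_le {C : ℝ}
    (hC : ∀ S T : SVDData 1,
      frobNorm (S.apply bendAtOne - T.apply bendAtOne) ≤ C * frobNorm (S.matrix - T.matrix))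
    {θ : ℝ} (hθ : 0 < θ) : ‖(θ : ℂ) - 2 * I‖ ≤ C * ‖1 + (1 + θ) * I‖ := by
  set w : ℂ := 1 + θ * I
  have hw : conj w ≠ 0 := by
    simp [w, Complex.ext_iff]
  have hu : ‖w / conj w‖ = 1 := by
    rw [norm_div, norm_conj, div_self (norm_ne_zero_iff.2 (by simpa using hw))]
  have h := hC (.ofPolar 1 norm_one 1 zero_le_one)
    (.ofPolar (w / conj w) hu (1 + 2 * θ) (by positivity))
  rw [SVDData.matrix_eq_apply, SVDData.matrix_eq_apply, SVDData.frobNorm_ofPolar_apply_sub,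
    SVDData.frobNorm_ofPolar_apply_sub, bendAtOne_one_add (by positivity)] at h
  have hcw : conj w = 1 - θ * I := by simp [w, sub_eq_add_neg]
  have e1 : 1 * bendAtOne 1 - w / conj w * (1 + ↑(2 * θ) * I)
      = 2 * θ / conj w * (θ - 2 * I) := by
    rw [bendAtOne_one]
    field_simp
    rw [hcw]
    push_cast
    linear_combination (-2 * θ ^ 2) * I_sq
  have e2 : 1 * ((1 : ℝ) : ℂ) - w / conj w * ↑(1 + 2 * θ)
      = -(2 * θ / conj w) * (1 + (1 + θ) * I) := by
    field_simp
    rw [hcw]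
    push_cast
    ring
  rw [e1, e2, norm_mul, norm_mul, norm_neg, mul_left_comm] at h
  exact le_of_mul_le_mul_left h (norm_pos_iff.2 (div_ne_zero (by norm_cast; positivity) hw))

theorem sqrt_two_le_of_forall_frobNorm_le {C : ℝ}
    (hC : ∀ S T : SVDData 1,
      frobNorm (S.apply bendAtOne - T.apply bendAtOne) ≤ C * frobNorm (S.matrix - T.matrix)) :
    √2 ≤ C := by
  have hclosed : IsClosed {θ : ℝ | ‖(θ : ℂ) - 2 * I‖ ≤ C * ‖1 + (1 + θ) * I‖} :=
    isClosed_le (by fun_prop) (by fun_prop)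
  have h0 : (0 : ℝ) ∈ closure (Set.Ioi 0) := by
    rw [closure_Ioi]
    exact Set.self_mem_Ici
  have h := hclosed.closure_subset_iff.2
    (fun _ hθ => norm_sub_two_mul_I_le_of_forall_frobNorm_le hC hθ) h0
  have h1 : ‖1 + I‖ = √2 := by simpa [one_add_one_eq_two] using norm_add_mul_I 1 1
  simp only [Set.mem_ofPred_eq, ofReal_zero, zero_sub, norm_neg, add_zero, one_mul, h1] at h
  rw [norm_mul, norm_I, mul_one, Complex.norm_two] at h
  refine le_of_mul_le_mul_right ?_ (Real.sqrt_pos.2 two_pos)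
  rwa [Real.mul_self_sqrt zero_le_two]

end Sharpness

theorem stmt_17 :
    (∀ (f : ℝ → ℂ) (L : ℝ), f 0 = 0 →
      (∀ x y : ℝ, 0 ≤ x → 0 ≤ y → ‖f x - f y‖ ≤ L * |x - y|) →
      ∀ (d : ℕ) (SA SB : SVDData d),
        frobNorm (SA.apply f - SB.apply f)
          ≤ Real.sqrt 2 * L * frobNorm (SA.matrix - SB.matrix)) ∧
    (∀ C : ℝ,
      (∀ (f : ℝ → ℂ) (L : ℝ), f 0 = 0 →
        (∀ x y : ℝ, 0 ≤ x → 0 ≤ y → ‖f x - f y‖ ≤ L * |x - y|) →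
        ∀ (d : ℕ) (SA SB : SVDData d),
          frobNorm (SA.apply f - SB.apply f)
            ≤ C * L * frobNorm (SA.matrix - SB.matrix)) →
      Real.sqrt 2 ≤ C) := by
  refine ⟨fun f L hf0 hf d SA SB => SVDData.frobNorm_apply_sub_apply_le hf0 hf SA SB,
    fun C hC => sqrt_two_le_of_forall_frobNorm_le fun S T => ?_⟩
  simpa using hC bendAtOne 1 bendAtOne_zero
    (fun x y _ _ => by simpa using norm_bendAtOne_sub_le x y) 1 S T
end

section
/- Let p be a complex polynomial with p(0) = 0. Then p_s(A) = p(A) for all normal compact operators (equivalently, all normal n × n complex matrices for all n) if and only if p(z) = α·z for some α ∈ ℂ. -/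
open Matrix in
theorem stmt_19 (p : Polynomial ℂ) (h0 : p.coeff 0 = 0) :
    (∀ (n : ℕ) (V : Matrix (Fin n) (Fin n) ℂ),
      V ∈ Matrix.unitaryGroup (Fin n) ℂ →
      ∀ lam : Fin n → ℂ,
        -- `p_s(A) = p(A)` for the normal matrix `A = V (diagonal lam) V*`
        V * Matrix.diagonal
            (fun i => if lam i = 0 then 0
              else lam i * p.eval (‖lam i‖ : ℂ) / (‖lam i‖ : ℂ)) * Vᴴ
          = V * Matrix.diagonal (fun i => p.eval (lam i)) * Vᴴ) ↔
    ∃ α : ℂ, p = Polynomial.C α * Polynomial.X := by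
  constructor
  · intro H
    have key : ∀ z : ℂ, ‖z‖ = 1 → p.eval z = z * p.eval 1 := by
      intro z hz
      have hz0 : z ≠ 0 := by
        intro h; rw [h] at hz; simp at hz
      have h1 := H 1 1 (one_mem _) (fun _ => z)
      simp only [Matrix.conjTranspose_one, Matrix.one_mul, Matrix.mul_one] at h1
      have h2 := congrFun (Matrix.diagonal_injective h1) 0
      simp only [hz0, if_false, hz] at h2
      push_cast at h2
      simpa using h2.symm
    refine ⟨p.eval 1, ?_⟩
    have hq : p - Polynomial.C (p.eval 1) * Polynomial.X = 0 := by
      apply Polynomial.eq_zero_of_infinite_isRoot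
      have hsub : (fun t : ℝ => Complex.exp (t * Complex.I)) '' Set.Icc 0 Real.pi ⊆
          { x | Polynomial.IsRoot (p - Polynomial.C (p.eval 1) * Polynomial.X) x } := by
        rintro _ ⟨t, _, rfl⟩
        have hnorm : ‖Complex.exp ((t : ℂ) * Complex.I)‖ = 1 := by
          simpa using Complex.abs_exp_ofReal_mul_I t
        show Polynomial.eval _ (p - Polynomial.C (Polynomial.eval 1 p) * Polynomial.X) = 0
        rw [Polynomial.eval_sub, Polynomial.eval_mul, Polynomial.eval_C, Polynomial.eval_X,
          key _ hnorm]
        ring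
      refine Set.Infinite.mono hsub ?_
      apply Set.Infinite.image
      · intro a ha b hb hab
        have : Real.cos a = Real.cos b := by
          have := congrArg Complex.re hab
          simpa [Complex.exp_ofReal_mul_I_re] using this
        exact Real.injOn_cos ha hb this
      · exact Set.Icc_infinite Real.pi_pos
    exact sub_eq_zero.mp hq
  · rintro ⟨α, rfl⟩ n V hV lam
    have hdiag : (fun i => if lam i = 0 then 0
        else lam i * (Polynomial.C α * Polynomial.X).eval (‖lam i‖ : ℂ) / (‖lam i‖ : ℂ))
        = fun i => (Polynomial.C α * Polynomial.X).eval (lam i) := by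
      funext i
      simp only [Polynomial.eval_mul, Polynomial.eval_C, Polynomial.eval_X]
      by_cases h : lam i = 0
      · simp [h]
      · have hn : (‖lam i‖ : ℂ) ≠ 0 := by
          simpa using norm_ne_zero_iff.mpr h
        rw [if_neg h]
        rw [mul_div_assoc, mul_div_assoc, div_self hn, mul_one, mul_comm]
    rw [hdiag]
end
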